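/- arXiv:hep-th/0208058 — 3 statements merged into one kernel-verified Lean document; each statement's English description precedes it below -/
import Mathlib

section
/- If every Young diagram Y_p in a sequence (Y_p)_{p∈ℕ} has at most S columns, then the generalized exterior derivative d = Y_{p+1} ∘ ∂ on the space Ω_{(Y)} of irreducible tensor fields satisfies d^{S+1} = 0; in particular Ω_{(Y)} is an (S+1)-complex. -/
/-!
STATEMENT 8: If every Young diagram `Y_p` of a sequence `(Y_p)` (with `|Y_p| = p`
and `Y_p ⊂ Y_{p+1}`, one box added at a time) has at most `S` columns, then the
generalized exterior derivative `d = 𝒴_{p+1} ∘ ∂` (partial derivative placed in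
the new box, followed by the Young symmetrizer) on irreducible tensor fields
satisfies `d^{S+1} = 0`: the space `Ω_{(Y)}` is an `(S+1)`-complex.

Tensor fields of shape `c : Fin S → ℕ` (column lengths) are modelled as smooth
functions `(Fin D → ℝ) → ((Σ i, Fin (c i)) → Fin D) → ℝ` whose indices are
labeled by the cells of the diagram.
-/

open scoped BigOperators

namespace GenComplex

/-- The cells of a diagram with column lengths `c`. -/
abbrev Cell (S : ℕ) (c : Fin S → ℕ) := Σ i : Fin S, Fin (c i)

/-- Covariant tensor fields on `ℝ^D` whose indices are labeled by the cells of
the diagram `c`. -/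
abbrev TField (D S : ℕ) (c : Fin S → ℕ) := (Fin D → ℝ) → (Cell S c → Fin D) → ℝ

/-- Action on cells of a product of permutations of the entries of each column. -/
def colAct {S : ℕ} {c : Fin S → ℕ} (σ : ∀ i : Fin S, Equiv.Perm (Fin (c i))) :
    Cell S c → Cell S c :=
  fun cell => ⟨cell.1, σ cell.1 cell.2⟩

/-- Action on cells of a product of permutations of the entries of each row
(a row permutation permutes the columns that are long enough to meet the row). -/
def rowAct {S : ℕ} {c : Fin S → ℕ}
    (τ : ∀ r : Fin (∑ i, c i), Equiv.Perm {i : Fin S // (r : ℕ) < c i}) :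
    Cell S c → Cell S c :=
  fun cell =>
    if h : (cell.2 : ℕ) < ∑ i, c i then
      let j := τ ⟨(cell.2 : ℕ), h⟩ ⟨cell.1, cell.2.2⟩
      ⟨j.1, ⟨(cell.2 : ℕ), j.2⟩⟩
    else cell

/-- The (unnormalized) Young symmetrizer of the diagram `c`: symmetrization of
the rows followed by antisymmetrization of the columns (with signs). -/
noncomputable def ysym {D S : ℕ} (c : Fin S → ℕ) (T : (Cell S c → Fin D) → ℝ) :
    (Cell S c → Fin D) → ℝ :=
  fun x =>
    ∑ σ : ∀ i : Fin S, Equiv.Perm (Fin (c i)),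
      ∑ τ : ∀ r : Fin (∑ i, c i), Equiv.Perm {i : Fin S // (r : ℕ) < c i},
        (((∏ i : Fin S, Equiv.Perm.sign (σ i) : ℤˣ) : ℤ) : ℝ) *
          T (fun cell => x (colAct σ (rowAct τ cell)))

/-- The partial derivative `∂_μ` of a scalar function on `ℝ^D`. -/
noncomputable def pd {D : ℕ} (μ : Fin D) (f : (Fin D → ℝ) → ℝ) : (Fin D → ℝ) → ℝ :=
  fun z => fderiv ℝ f z (Pi.single μ 1)

/-- Embedding of the cells of a subdiagram into those of a larger diagram. -/
def emb {S : ℕ} {c c' : Fin S → ℕ} (hle : ∀ i, c i ≤ c' i) : Cell S c → Cell S c' :=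
  fun cell => ⟨cell.1, Fin.castLE (hle cell.1) cell.2⟩

/-- The generalized exterior derivative `d = 𝒴_{p+1} ∘ ∂ : Ω^p_{(Y)} → Ω^{p+1}_{(Y)}`:
take the partial derivative in the direction of the index sitting in the new box
(bottom of column `j`) and apply the Young symmetrizer of the bigger diagram. -/
noncomputable def Dop {D S : ℕ} {c c' : Fin S → ℕ} (hle : ∀ i, c i ≤ c' i)
    (j : Fin S) (hj : c j < c' j) (T : TField D S c) : TField D S c' :=
  fun z => ysym c' (fun y =>
    pd (y ⟨j, ⟨c j, hj⟩⟩) (fun w => T w (fun cell => y (emb hle cell))) z)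

/-- Iterated generalized exterior derivative along the diagram sequence `c`. -/
noncomputable def dIter {D S : ℕ} (c : ℕ → Fin S → ℕ)
    (hle : ∀ p i, c p i ≤ c (p + 1) i) (j : ℕ → Fin S)
    (hj : ∀ p, c p (j p) < c (p + 1) (j p)) (p : ℕ) :
    ∀ q : ℕ, TField D S (c p) → TField D S (c (p + q))
  | 0, T => T
  | (q + 1), T => Dop (hle (p + q)) (j (p + q)) (hj (p + q)) (dIter c hle j hj p q T)


/-! ### Auxiliary machinery for the proof -/

section Aux

variable {D S : ℕ}

/-! #### Analysis: basic properties of `pd` and iterated derivatives -/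

lemma pd_smooth {f : (Fin D → ℝ) → ℝ} (hf : ContDiff ℝ (⊤ : ℕ∞) f) (v : Fin D) :
    ContDiff ℝ (⊤ : ℕ∞) (pd v f) := by
  have h1 : ContDiff ℝ (⊤ : ℕ∞) (fderiv ℝ f) := hf.fderiv_right (by simp)
  exact (ContinuousLinearMap.apply ℝ ℝ (Pi.single v 1)).contDiff.comp h1

lemma pd_apply_eq {f : (Fin D → ℝ) → ℝ} (hf : ContDiff ℝ (⊤ : ℕ∞) f) (a b : Fin D) (z : Fin D → ℝ) :
    pd a (pd b f) z = fderiv ℝ (fderiv ℝ f) z (Pi.single a 1) (Pi.single b 1) := by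
  have hd : DifferentiableAt ℝ (fderiv ℝ f) z :=
    ((hf.fderiv_right (m := (⊤ : ℕ∞)) (by simp)).differentiable (by simp)).differentiableAt
  have : pd a (pd b f) z
      = fderiv ℝ (fun y => (fderiv ℝ f y)
          ((fun _ : Fin D → ℝ => (Pi.single b 1 : Fin D → ℝ)) y)) z (Pi.single a 1) := rfl
  rw [this, fderiv_clm_apply hd (differentiableAt_const _)]
  simp

lemma pd_comm {f : (Fin D → ℝ) → ℝ} (hf : ContDiff ℝ (⊤ : ℕ∞) f) (a b : Fin D) :
    pd a (pd b f) = pd b (pd a f) := by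
  funext z
  rw [pd_apply_eq hf, pd_apply_eq hf]
  exact (hf.contDiffAt.isSymmSndFDerivAt (by rw [minSmoothness_of_isRCLikeNormedField]; exact WithTop.coe_le_coe.mpr (le_top : (2 : ℕ∞) ≤ ⊤))).eq _ _

lemma pd_sum {ι : Type*} (s : Finset ι) (g : ι → (Fin D → ℝ) → ℝ) (v : Fin D) (z : Fin D → ℝ)
    (h : ∀ m ∈ s, DifferentiableAt ℝ (g m) z) :
    pd v (fun w => ∑ m ∈ s, g m w) z = ∑ m ∈ s, pd v (g m) z := by
  rw [pd, fderiv_fun_sum h]; simp [pd]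

lemma pd_const_mul (g : (Fin D → ℝ) → ℝ) (r : ℝ) (v : Fin D) (z : Fin D → ℝ)
    (h : DifferentiableAt ℝ g z) :
    pd v (fun w => r * g w) z = r * pd v g z := by
  rw [pd, fderiv_const_mul h]; simp [pd]

/-- Iterated partial derivative in the directions `μ 0, …, μ (q-1)` (outermost last). -/
noncomputable def mder : (q : ℕ) → (Fin q → Fin D) → ((Fin D → ℝ) → ℝ) → (Fin D → ℝ) → ℝ
  | 0, _, f => f
  | q+1, μ, f => pd (μ (Fin.last q)) (mder q (fun k => μ k.castSucc) f)

lemma mder_smooth {f : (Fin D → ℝ) → ℝ} (hf : ContDiff ℝ (⊤ : ℕ∞) f) :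
    ∀ (q : ℕ) (μ : Fin q → Fin D), ContDiff ℝ (⊤ : ℕ∞) (mder q μ f)
  | 0, _ => hf
  | q+1, μ => pd_smooth (mder_smooth hf q _) _

lemma swap_castSucc {q : ℕ} (a b k : Fin q) :
    Equiv.swap a.castSucc b.castSucc k.castSucc = (Equiv.swap a b k).castSucc := by
  rcases eq_or_ne k a with rfl | hka
  · simp
  · rcases eq_or_ne k b with rfl | hkb
    · simp
    · rw [Equiv.swap_apply_of_ne_of_ne (Fin.castSucc_injective _ |>.ne hka)
        (Fin.castSucc_injective _ |>.ne hkb), Equiv.swap_apply_of_ne_of_ne hka hkb]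

lemma swap_fixes_last {q : ℕ} (a b : Fin q) :
    Equiv.swap a.castSucc b.castSucc (Fin.last q) = Fin.last q :=
  Equiv.swap_apply_of_ne_of_ne (Fin.castSucc_lt_last a).ne' (Fin.castSucc_lt_last b).ne'

lemma mder_swap_top {f : (Fin D → ℝ) → ℝ} (hf : ContDiff ℝ (⊤ : ℕ∞) f) (r : ℕ) (μ : Fin (r+2) → Fin D) :
    mder (r+2) (μ ∘ ⇑(Equiv.swap (Fin.last r).castSucc (Fin.last (r+1)))) f = mder (r+2) μ f := by
  show pd _ (pd _ (mder r _ f)) = pd _ (pd _ (mder r _ f))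
  have h1 : (μ ∘ ⇑(Equiv.swap (Fin.last r).castSucc (Fin.last (r+1)))) (Fin.last (r+1))
      = μ (Fin.last r).castSucc := by simp
  have h2 : (μ ∘ ⇑(Equiv.swap (Fin.last r).castSucc (Fin.last (r+1)))) (Fin.last r).castSucc
      = μ (Fin.last (r+1)) := by simp
  have h3 : (fun k : Fin r => (μ ∘ ⇑(Equiv.swap (Fin.last r).castSucc (Fin.last (r+1))))
      k.castSucc.castSucc) = fun k : Fin r => μ k.castSucc.castSucc := by
    funext k
    have hk1 : k.castSucc.castSucc ≠ (Fin.last r).castSucc :=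
      (Fin.castSucc_injective _).ne (Fin.castSucc_lt_last k).ne
    have hk2 : k.castSucc.castSucc ≠ Fin.last (r+1) := (Fin.castSucc_lt_last _).ne
    simp [Equiv.swap_apply_of_ne_of_ne hk1 hk2]
  beta_reduce
  rw [h1, h2, h3]
  rw [pd_comm (mder_smooth hf r _)]

lemma mder_swap {f : (Fin D → ℝ) → ℝ} (hf : ContDiff ℝ (⊤ : ℕ∞) f) :
    ∀ (q : ℕ) (μ : Fin q → Fin D) (a b : Fin q),
      mder q (μ ∘ ⇑(Equiv.swap a b)) f = mder q μ f := by
  intro q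
  induction q with
  | zero => exact fun _ a => a.elim0
  | succ q IH =>
    intro μ a b
    have hcast : ∀ (ν : Fin (q+1) → Fin D) (a' b' : Fin q),
        mder (q+1) (ν ∘ ⇑(Equiv.swap a'.castSucc b'.castSucc)) f = mder (q+1) ν f := by
      intro ν a' b'
      show pd _ (mder q _ f) = pd _ (mder q _ f)
      have h1 : (ν ∘ ⇑(Equiv.swap a'.castSucc b'.castSucc)) (Fin.last q) = ν (Fin.last q) := by
        rw [Function.comp_apply, swap_fixes_last]
      have h2 : (fun k : Fin q => (ν ∘ ⇑(Equiv.swap a'.castSucc b'.castSucc)) k.castSucc)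
          = (fun k : Fin q => ν k.castSucc) ∘ ⇑(Equiv.swap a' b') := by
        funext k; simp only [Function.comp_apply, swap_castSucc]
      rw [h1, h2, IH]
    rcases eq_or_ne a b with rfl | hab
    · simp
    have hlast : ∀ (ν : Fin (q+1) → Fin D) (a : Fin (q+1)), a ≠ Fin.last q →
        mder (q+1) (ν ∘ ⇑(Equiv.swap a (Fin.last q))) f = mder (q+1) ν f := by
      intro ν a ha
      obtain ⟨a', rfl⟩ := Fin.exists_castSucc_eq.mpr ha
      match q, a', ν with
      | r+1, a', ν =>
        rcases eq_or_ne a' (Fin.last r) with rfl | hap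
        · exact mder_swap_top hf r ν
        · set p : Fin (r+2) := (Fin.last r).castSucc with hp
          set F : Equiv.Perm (Fin (r+2)) := Equiv.swap p (Fin.last (r+1)) with hF
          have hfa : F a'.castSucc = a'.castSucc := by
            apply Equiv.swap_apply_of_ne_of_ne
            · exact (Fin.castSucc_injective _).ne hap
            · exact (Fin.castSucc_lt_last _).ne
          have hfp : F p = Fin.last (r+1) := Equiv.swap_apply_left _ _
          have key : Equiv.swap a'.castSucc (Fin.last (r+1))
              = F * Equiv.swap a'.castSucc p * F := by
            have := Equiv.swap_apply_apply F a'.castSucc p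
            rw [hfa, hfp] at this
            rw [this, Equiv.swap_inv]
          have hcomp : ν ∘ ⇑(Equiv.swap a'.castSucc (Fin.last (r+1)))
              = (((ν ∘ ⇑F) ∘ ⇑(Equiv.swap a'.castSucc p)) ∘ ⇑F) := by
            funext k
            simp only [key, Function.comp_apply, Equiv.Perm.mul_apply]
          rw [hcomp, mder_swap_top hf r, hp, hcast, mder_swap_top hf r]
    by_cases ha : a = Fin.last q
    · subst ha
      rw [Equiv.swap_comm]
      exact hlast μ b (Ne.symm hab)
    · by_cases hb : b = Fin.last q
      · subst hb
        exact hlast μ a ha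
      · obtain ⟨a', rfl⟩ := Fin.exists_castSucc_eq.mpr ha
        obtain ⟨b', rfl⟩ := Fin.exists_castSucc_eq.mpr hb
        exact hcast μ a' b'

/-! #### Combinatorics of the cell actions -/

variable {c : Fin S → ℕ}

lemma cell_lt_sum (u : Cell S c) : (u.2 : ℕ) < ∑ i, c i :=
  lt_of_lt_of_le u.2.isLt
    (Finset.single_le_sum (fun i _ => Nat.zero_le (c i)) (Finset.mem_univ u.1))

lemma rowAct_def (τ : ∀ r : Fin (∑ i, c i), Equiv.Perm {i : Fin S // (r : ℕ) < c i})
    (u : Cell S c) :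
    rowAct τ u = ⟨(τ ⟨(u.2 : ℕ), cell_lt_sum u⟩ ⟨u.1, u.2.2⟩).1,
      ⟨(u.2 : ℕ), (τ ⟨(u.2 : ℕ), cell_lt_sum u⟩ ⟨u.1, u.2.2⟩).2⟩⟩ := by
  rw [rowAct, dif_pos (cell_lt_sum u)]

lemma rowAct_leftInv (τ : ∀ r : Fin (∑ i, c i), Equiv.Perm {i : Fin S // (r : ℕ) < c i})
    (u : Cell S c) : rowAct (fun r => (τ r)⁻¹) (rowAct τ u) = u := by
  obtain ⟨i, r⟩ := u
  rw [rowAct_def, rowAct_def]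
  show (⟨((τ ⟨(r : ℕ), cell_lt_sum ⟨i, r⟩⟩)⁻¹
        ((τ ⟨(r : ℕ), cell_lt_sum ⟨i, r⟩⟩) ⟨i, r.2⟩)).1,
      ⟨(r : ℕ), ((τ ⟨(r : ℕ), cell_lt_sum ⟨i, r⟩⟩)⁻¹
        ((τ ⟨(r : ℕ), cell_lt_sum ⟨i, r⟩⟩) ⟨i, r.2⟩)).2⟩⟩ : Cell S c) = ⟨i, r⟩
  rw [Equiv.Perm.inv_def, Equiv.symm_apply_apply]

lemma rowAct_injective (τ : ∀ r : Fin (∑ i, c i), Equiv.Perm {i : Fin S // (r : ℕ) < c i}) :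
    Function.Injective (rowAct τ) :=
  Function.LeftInverse.injective (rowAct_leftInv τ)

lemma colAct_leftInv (σ : ∀ i : Fin S, Equiv.Perm (Fin (c i))) (u : Cell S c) :
    colAct (fun i => (σ i)⁻¹) (colAct σ u) = u := by
  obtain ⟨i, r⟩ := u; simp [colAct]; exact (σ i).symm_apply_apply r

lemma colAct_injective (σ : ∀ i : Fin S, Equiv.Perm (Fin (c i))) :
    Function.Injective (colAct σ) :=
  Function.LeftInverse.injective (colAct_leftInv σ)

lemma colAct_mul (σ s : ∀ i : Fin S, Equiv.Perm (Fin (c i))) (u : Cell S c) :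
    colAct (σ * s) u = colAct σ (colAct s u) := rfl

lemma colAct_update_swap (i : Fin S) (r1 r2 : Fin (c i)) (u : Cell S c) :
    colAct (Function.update (1 : ∀ i : Fin S, Equiv.Perm (Fin (c i))) i (Equiv.swap r1 r2)) u
      = Equiv.swap (⟨i, r1⟩ : Cell S c) ⟨i, r2⟩ u := by
  obtain ⟨i₀, r⟩ := u
  by_cases h : i₀ = i
  · subst h
    have hL : ∀ (x : Fin (c i₀)),
        colAct (Function.update (1 : ∀ i : Fin S, Equiv.Perm (Fin (c i))) i₀ (Equiv.swap r1 r2))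
          (⟨i₀, x⟩ : Cell S c) = ⟨i₀, Equiv.swap r1 r2 x⟩ := by
      intro x
      show Sigma.mk i₀ _ = _
      rw [Function.update_self]
    rw [hL r]
    rcases eq_or_ne r r1 with rfl | h1
    · rw [Equiv.swap_apply_left, Equiv.swap_apply_left]
    · rcases eq_or_ne r r2 with rfl | h2
      · rw [Equiv.swap_apply_right, Equiv.swap_apply_right]
      · rw [Equiv.swap_apply_of_ne_of_ne h1 h2]
        exact (Equiv.swap_apply_of_ne_of_ne (a := (⟨i₀, r1⟩ : Cell S c))
          (b := (⟨i₀, r2⟩ : Cell S c))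
          (fun h => h1 (eq_of_heq (Sigma.mk.inj_iff.mp h).2))
          (fun h => h2 (eq_of_heq (Sigma.mk.inj_iff.mp h).2))).symm
  · rw [colAct, Function.update_of_ne h]
    rw [Equiv.swap_apply_of_ne_of_ne (fun h' => h (congrArg Sigma.fst h'))
      (fun h' => h (congrArg Sigma.fst h'))]
    rfl

lemma emb_injective {c' : Fin S → ℕ} (hle : ∀ i, c i ≤ c' i) :
    Function.Injective (emb hle) := by
  rintro ⟨i, r⟩ ⟨i', r'⟩ h
  obtain rfl : i = i' := congrArg Sigma.fst h
  obtain rfl : r = r' := Fin.castLE_injective _ (eq_of_heq (Sigma.mk.inj_iff.mp h).2)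
  rfl

lemma emb_ne_new {c' : Fin S → ℕ} (hle : ∀ i, c i ≤ c' i) (j : Fin S) (hj : c j < c' j)
    (u : Cell S c) : emb hle u ≠ ⟨j, ⟨c j, hj⟩⟩ := by
  obtain ⟨i, r⟩ := u
  intro h
  obtain rfl : i = j := congrArg Sigma.fst h
  have : (Fin.castLE (hle i) r : Fin (c' i)) = ⟨c i, hj⟩ := eq_of_heq (Sigma.mk.inj_iff.mp h).2
  have := congrArg Fin.val this
  simp at this
  omega

lemma swap_inj_apply {α β : Type*} [DecidableEq α] [DecidableEq β] {w : α → β}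
    (hw : Function.Injective w) (a b k : α) :
    Equiv.swap (w a) (w b) (w k) = w (Equiv.swap a b k) := by
  rcases eq_or_ne k a with rfl | hka
  · simp
  · rcases eq_or_ne k b with rfl | hkb
    · simp
    · rw [Equiv.swap_apply_of_ne_of_ne (hw.ne hka) (hw.ne hkb),
        Equiv.swap_apply_of_ne_of_ne hka hkb]

lemma snoc_inj {α : Type*} {n : ℕ} {f : Fin n → α} (hf : Function.Injective f) {a : α}
    (ha : ∀ k, f k ≠ a) : Function.Injective (Fin.snoc f a : Fin (n+1) → α) := by
  intro k1 k2 h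
  induction k1 using Fin.lastCases with
  | last =>
    induction k2 using Fin.lastCases with
    | last => rfl
    | cast k2 => rw [Fin.snoc_last, Fin.snoc_castSucc] at h; exact absurd h.symm (ha k2)
  | cast k1 =>
    induction k2 using Fin.lastCases with
    | last => rw [Fin.snoc_last, Fin.snoc_castSucc] at h; exact absurd h (ha k1)
    | cast k2 =>
      rw [Fin.snoc_castSucc, Fin.snoc_castSucc] at h
      rw [hf h]

lemma sum_cancel_of_mul_right {G : Type*} [Group G] [Fintype G] (s : G) (F : G → ℝ)
    (h : ∀ g, F (g * s) = -F g) : ∑ g : G, F g = 0 := by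
  have h1 : ∑ g : G, F (g * s) = ∑ g : G, F g :=
    Fintype.sum_equiv (Equiv.mulRight s) _ _ (fun g => rfl)
  simp_rw [h] at h1
  rw [Finset.sum_neg_distrib] at h1
  linarith

/-! #### Presentations of iterated derivatives -/

/-- `Good cp cc T q U` says that `U` is a finite linear combination of `q`-fold iterated
derivatives of `T`, where in each term the `q` derivative directions sit at `q` distinct
cells, disjoint from the cells carrying the original indices of `T`. -/
def Good (cp cc : Fin S → ℕ) (T : TField D S cp) (q : ℕ) (U : TField D S cc) : Prop :=
  ∃ (ι : Type) (inst : Fintype ι) (ε : ι → ℝ) (dc : ι → Fin q → Cell S cc)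
    (rs : ι → Cell S cp → Cell S cc),
    (∀ m, Function.Injective (dc m)) ∧
    (∀ m k u, dc m k ≠ rs m u) ∧
    ∀ z x, U z x = ∑ m ∈ (@Finset.univ ι inst),
      ε m * mder q (fun k => x (dc m k)) (fun w => T w (fun u => x (rs m u))) z

lemma Good.refl (cp : Fin S → ℕ) (T : TField D S cp) : Good cp cp T 0 T := by
  refine ⟨PUnit, inferInstance, fun _ => 1, fun _ k => k.elim0, fun _ u => u,
    fun _ k => k.elim0, fun _ k => k.elim0, fun z x => ?_⟩
  simp [mder]

lemma Dop_apply {D : ℕ} {cc cc' : Fin S → ℕ} (hle : ∀ i, cc i ≤ cc' i) (j : Fin S)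
    (hj : cc j < cc' j) (U : TField D S cc) (z : Fin D → ℝ) (x : Cell S cc' → Fin D) :
    Dop hle j hj U z x
      = ∑ σ : ∀ i : Fin S, Equiv.Perm (Fin (cc' i)),
          ∑ τ : ∀ r : Fin (∑ i, cc' i), Equiv.Perm {i : Fin S // (r : ℕ) < cc' i},
            (((∏ i : Fin S, Equiv.Perm.sign (σ i) : ℤˣ) : ℤ) : ℝ) *
              pd (x (colAct σ (rowAct τ ⟨j, ⟨cc j, hj⟩⟩)))
                (fun w => U w (fun u => x (colAct σ (rowAct τ (emb hle u))))) z := rfl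

lemma pd_expand {cp cc cc' : Fin S → ℕ} {T : TField D S cp}
    (hT : ∀ x, ContDiff ℝ (⊤ : ℕ∞) fun z => T z x)
    {q : ℕ} {U : TField D S cc} {ι : Type} [Fintype ι] (ε : ι → ℝ)
    (dc : ι → Fin q → Cell S cc) (rs : ι → Cell S cp → Cell S cc)
    (heq : ∀ z x, U z x = ∑ m : ι,
      ε m * mder q (fun k => x (dc m k)) (fun w => T w (fun u => x (rs m u))) z)
    (hle : ∀ i, cc i ≤ cc' i) (j : Fin S) (hj : cc j < cc' j)
    (σ : ∀ i : Fin S, Equiv.Perm (Fin (cc' i)))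
    (τ : ∀ r : Fin (∑ i, cc' i), Equiv.Perm {i : Fin S // (r : ℕ) < cc' i})
    (z : Fin D → ℝ) (x : Cell S cc' → Fin D) :
    pd (x (colAct σ (rowAct τ ⟨j, ⟨cc j, hj⟩⟩)))
        (fun w => U w (fun u => x (colAct σ (rowAct τ (emb hle u))))) z
      = ∑ m : ι, ε m * mder (q+1)
          (fun k => x (colAct σ (rowAct τ
            ((Fin.snoc (fun k' => emb hle (dc m k')) (⟨j, ⟨cc j, hj⟩⟩ : Cell S cc') : Fin _ → Cell S cc') k))))
          (fun w' => T w' (fun u => x (colAct σ (rowAct τ (emb hle (rs m u)))))) z := by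
  have h1 : (fun w => U w (fun u => x (colAct σ (rowAct τ (emb hle u)))))
      = fun w => ∑ m : ι, ε m * mder q (fun k => x (colAct σ (rowAct τ (emb hle (dc m k)))))
          (fun w' => T w' (fun u => x (colAct σ (rowAct τ (emb hle (rs m u)))))) w := by
    funext w; exact heq w _
  rw [h1, pd_sum]
  · refine Finset.sum_congr rfl (fun m _ => ?_)
    rw [pd_const_mul _ _ _ _ (((mder_smooth (hT _) q _).differentiable (by simp)).differentiableAt)]
    congr 1
    have h2 : mder (q+1)
        (Fin.snoc (fun k => x (colAct σ (rowAct τ (emb hle (dc m k)))))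
          (x (colAct σ (rowAct τ ⟨j, ⟨cc j, hj⟩⟩))) : Fin (q+1) → Fin D)
        (fun w' => T w' (fun u => x (colAct σ (rowAct τ (emb hle (rs m u))))))
        = pd (x (colAct σ (rowAct τ ⟨j, ⟨cc j, hj⟩⟩)))
            (mder q (fun k => x (colAct σ (rowAct τ (emb hle (dc m k)))))
              (fun w' => T w' (fun u => x (colAct σ (rowAct τ (emb hle (rs m u))))))) := by
      simp only [mder, Fin.snoc_last, Fin.snoc_castSucc]
    rw [← h2]
    congr 1
    funext k
    induction k using Fin.lastCases with
    | last => rw [Fin.snoc_last, Fin.snoc_last]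
    | cast k => rw [Fin.snoc_castSucc, Fin.snoc_castSucc]
  · intro m _
    exact (((mder_smooth (hT _) q _).differentiable (by simp)).differentiableAt).const_mul _

lemma Good.step {cp cc cc' : Fin S → ℕ} {T : TField D S cp}
    (hT : ∀ x, ContDiff ℝ (⊤ : ℕ∞) fun z => T z x) {q : ℕ} {U : TField D S cc}
    (hU : Good cp cc T q U) (hle : ∀ i, cc i ≤ cc' i) (j : Fin S) (hj : cc j < cc' j) :
    Good cp cc' T (q+1) (Dop hle j hj U) := by
  classical
  obtain ⟨ι, inst, ε, dc, rs, hinj, hdis, heq⟩ := hU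
  letI := inst
  refine ⟨(∀ i : Fin S, Equiv.Perm (Fin (cc' i))) ×
      (∀ r : Fin (∑ i, cc' i), Equiv.Perm {i : Fin S // (r : ℕ) < cc' i}) × ι,
    inferInstance,
    fun m' => (((∏ i : Fin S, Equiv.Perm.sign (m'.1 i) : ℤˣ) : ℤ) : ℝ) * ε m'.2.2,
    fun m' k => colAct m'.1 (rowAct m'.2.1
      ((Fin.snoc (fun k' => emb hle (dc m'.2.2 k')) (⟨j, ⟨cc j, hj⟩⟩ : Cell S cc') : Fin _ → Cell S cc') k)),
    fun m' u => colAct m'.1 (rowAct m'.2.1 (emb hle (rs m'.2.2 u))), ?_, ?_, ?_⟩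
  · rintro ⟨σ, τ, m⟩ k1 k2 h
    exact snoc_inj ((emb_injective hle).comp (hinj m))
      (fun k => emb_ne_new hle j hj (dc m k))
      (rowAct_injective τ (colAct_injective σ h))
  · rintro ⟨σ, τ, m⟩ k u h
    have h2 := rowAct_injective τ (colAct_injective σ h)
    induction k using Fin.lastCases with
    | last =>
      rw [Fin.snoc_last] at h2
      exact emb_ne_new hle j hj (rs m u) h2.symm
    | cast k =>
      rw [Fin.snoc_castSucc] at h2
      exact hdis m k u (emb_injective hle h2)
  · intro z x
    rw [Dop_apply]
    simp only [Fintype.sum_prod_type]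
    refine Finset.sum_congr rfl (fun σ _ => Finset.sum_congr rfl (fun τ _ => ?_))
    rw [pd_expand hT ε dc rs heq hle j hj σ τ z x, Finset.mul_sum]
    exact Finset.sum_congr rfl (fun m _ => (mul_assoc _ _ _).symm)

lemma Good.kill {cp cc cc' : Fin S → ℕ} {T : TField D S cp}
    (hT : ∀ x, ContDiff ℝ (⊤ : ℕ∞) fun z => T z x) {U : TField D S cc}
    (hU : Good cp cc T S U) (hle : ∀ i, cc i ≤ cc' i) (j : Fin S) (hj : cc j < cc' j) :
    Dop hle j hj U = 0 := by
  classical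
  obtain ⟨ι, inst, ε, dc, rs, hinj, hdis, heq⟩ := hU
  letI := inst
  funext z x
  show Dop hle j hj U z x = 0
  rw [Dop_apply]
  have e1 : ∀ (σ : ∀ i : Fin S, Equiv.Perm (Fin (cc' i)))
      (τ : ∀ r : Fin (∑ i, cc' i), Equiv.Perm {i : Fin S // (r : ℕ) < cc' i}),
      (((∏ i : Fin S, Equiv.Perm.sign (σ i) : ℤˣ) : ℤ) : ℝ) *
        pd (x (colAct σ (rowAct τ ⟨j, ⟨cc j, hj⟩⟩)))
          (fun w => U w (fun u => x (colAct σ (rowAct τ (emb hle u))))) z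
      = ∑ m : ι, (((∏ i : Fin S, Equiv.Perm.sign (σ i) : ℤˣ) : ℤ) : ℝ) *
          (ε m * mder (S+1)
            (fun k => x (colAct σ (rowAct τ
              ((Fin.snoc (fun k' => emb hle (dc m k')) (⟨j, ⟨cc j, hj⟩⟩ : Cell S cc') : Fin _ → Cell S cc') k))))
            (fun w' => T w' (fun u => x (colAct σ (rowAct τ (emb hle (rs m u)))))) z) := by
    intro σ τ
    rw [pd_expand hT ε dc rs heq hle j hj σ τ z x, Finset.mul_sum]
  calc (∑ σ : ∀ i : Fin S, Equiv.Perm (Fin (cc' i)),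
        ∑ τ : ∀ r : Fin (∑ i, cc' i), Equiv.Perm {i : Fin S // (r : ℕ) < cc' i},
          (((∏ i : Fin S, Equiv.Perm.sign (σ i) : ℤˣ) : ℤ) : ℝ) *
            pd (x (colAct σ (rowAct τ ⟨j, ⟨cc j, hj⟩⟩)))
              (fun w => U w (fun u => x (colAct σ (rowAct τ (emb hle u))))) z)
      = ∑ σ : ∀ i : Fin S, Equiv.Perm (Fin (cc' i)),
        ∑ τ : ∀ r : Fin (∑ i, cc' i), Equiv.Perm {i : Fin S // (r : ℕ) < cc' i},
        ∑ m : ι, (((∏ i : Fin S, Equiv.Perm.sign (σ i) : ℤˣ) : ℤ) : ℝ) *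
          (ε m * mder (S+1)
            (fun k => x (colAct σ (rowAct τ
              ((Fin.snoc (fun k' => emb hle (dc m k')) (⟨j, ⟨cc j, hj⟩⟩ : Cell S cc') : Fin _ → Cell S cc') k))))
            (fun w' => T w' (fun u => x (colAct σ (rowAct τ (emb hle (rs m u)))))) z) := by
        exact Finset.sum_congr rfl (fun σ _ => Finset.sum_congr rfl (fun τ _ => e1 σ τ))
    _ = 0 := ?_
  rw [Finset.sum_comm]
  refine Finset.sum_eq_zero (fun τ _ => ?_)
  rw [Finset.sum_comm]
  refine Finset.sum_eq_zero (fun m _ => ?_)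
  set E : Fin (S+1) → Cell S cc' :=
    Fin.snoc (fun k' => emb hle (dc m k')) (⟨j, ⟨cc j, hj⟩⟩ : Cell S cc') with hE
  have hEinj : Function.Injective E :=
    snoc_inj ((emb_injective hle).comp (hinj m)) (fun k => emb_ne_new hle j hj (dc m k))
  have hEne : ∀ (k : Fin (S+1)) (u : Cell S cp), E k ≠ emb hle (rs m u) := by
    intro k u
    induction k using Fin.lastCases with
    | last =>
      rw [hE, Fin.snoc_last]
      exact fun h => emb_ne_new hle j hj (rs m u) h.symm
    | cast k =>
      rw [hE, Fin.snoc_castSucc]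
      intro h
      exact hdis m k u (emb_injective hle h)
  have hwinj : Function.Injective (fun k : Fin (S+1) => rowAct τ (E k)) :=
    fun k1 k2 h => hEinj (rowAct_injective τ h)
  have hcard : Fintype.card (Fin S) < Fintype.card (Fin (S+1)) := by simp
  obtain ⟨a, b, hab, hfst⟩ :=
    Fintype.exists_ne_map_eq_of_card_lt (fun k : Fin (S+1) => (rowAct τ (E k)).1) hcard
  rcases hWa : rowAct τ (E a) with ⟨ia, ra⟩
  rcases hWb : rowAct τ (E b) with ⟨ib, rb⟩
  have hfst' : (rowAct τ (E a)).1 = (rowAct τ (E b)).1 := hfst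
  rw [hWa, hWb] at hfst'
  have hiab : ia = ib := hfst'
  subst hiab
  have hrne : ra ≠ rb := by
    intro h
    apply hab
    apply hwinj
    show rowAct τ (E a) = rowAct τ (E b)
    rw [hWa, hWb, h]
  refine sum_cancel_of_mul_right
    (Function.update (1 : ∀ i : Fin S, Equiv.Perm (Fin (cc' i))) ia (Equiv.swap ra rb)) _ ?_
  intro σ
  have hsign : ((((∏ i : Fin S, Equiv.Perm.sign
        ((σ * Function.update (1 : ∀ i : Fin S, Equiv.Perm (Fin (cc' i))) ia
          (Equiv.swap ra rb)) i) : ℤˣ) : ℤ)) : ℝ)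
      = -((((∏ i : Fin S, Equiv.Perm.sign (σ i) : ℤˣ) : ℤ)) : ℝ) := by
    have h2 : (∏ i : Fin S, Equiv.Perm.sign
        (Function.update (1 : ∀ i : Fin S, Equiv.Perm (Fin (cc' i))) ia
          (Equiv.swap ra rb) i)) = (-1 : ℤˣ) := by
      rw [Fintype.prod_eq_single ia (fun i₂ hne => by rw [Function.update_of_ne hne]; simp)]
      rw [Function.update_self]
      exact Equiv.Perm.sign_swap hrne
    have h3 : (∏ i : Fin S, Equiv.Perm.sign
        ((σ * Function.update (1 : ∀ i : Fin S, Equiv.Perm (Fin (cc' i))) ia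
          (Equiv.swap ra rb)) i))
        = -(∏ i : Fin S, Equiv.Perm.sign (σ i)) := by
      simp only [Pi.mul_apply, map_mul, Finset.prod_mul_distrib, h2, mul_neg_one]
    rw [h3, Units.val_neg, Int.cast_neg]
  have hcs : ∀ u : Cell S cc',
      colAct (Function.update (1 : ∀ i : Fin S, Equiv.Perm (Fin (cc' i))) ia
        (Equiv.swap ra rb)) u = Equiv.swap (⟨ia, ra⟩ : Cell S cc') ⟨ia, rb⟩ u :=
    colAct_update_swap ia ra rb
  have hdirs : (fun k : Fin (S+1) => x (colAct
        (σ * Function.update (1 : ∀ i : Fin S, Equiv.Perm (Fin (cc' i))) ia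
          (Equiv.swap ra rb)) (rowAct τ (E k))))
      = (fun k : Fin (S+1) => x (colAct σ (rowAct τ (E k)))) ∘ ⇑(Equiv.swap a b) := by
    funext k
    rw [colAct_mul, hcs, ← hWa, ← hWb]
    show x (colAct σ ((Equiv.swap ((fun k => rowAct τ (E k)) a)
      ((fun k => rowAct τ (E k)) b)) ((fun k => rowAct τ (E k)) k))) = _
    rw [swap_inj_apply hwinj a b k]
    rfl
  have hfb : (fun w' => T w' (fun u => x (colAct
        (σ * Function.update (1 : ∀ i : Fin S, Equiv.Perm (Fin (cc' i))) ia
          (Equiv.swap ra rb)) (rowAct τ (emb hle (rs m u))))))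
      = fun w' => T w' (fun u => x (colAct σ (rowAct τ (emb hle (rs m u))))) := by
    funext w'
    congr 1
    funext u
    rw [colAct_mul, hcs, ← hWa, ← hWb]
    rw [Equiv.swap_apply_of_ne_of_ne
      (fun h => hEne a u (rowAct_injective τ h).symm)
      (fun h => hEne b u (rowAct_injective τ h).symm)]
  rw [hsign, hdirs, hfb, mder_swap (hT _) (S+1) _ a b]
  ring

end Aux

/-- `d^{S+1} = 0` on any sequence of Young diagrams with at most `S` columns. -/
theorem d_pow_succ_eq_zero (D S : ℕ) (c : ℕ → Fin S → ℕ) (j : ℕ → Fin S)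
    (hyoung : ∀ p, ∀ i k : Fin S, i ≤ k → c p k ≤ c p i)
    (hsum : ∀ p, ∑ i, c p i = p)
    (hupd : ∀ p, c (p + 1) = Function.update (c p) (j p) (c p (j p) + 1))
    (hle : ∀ p i, c p i ≤ c (p + 1) i)
    (hj : ∀ p, c p (j p) < c (p + 1) (j p))
    (p : ℕ) (T : TField D S (c p))
    (hT : ∀ x : Cell S (c p) → Fin D, ContDiff ℝ (⊤ : ℕ∞) (fun z => T z x)) :
    dIter c hle j hj p (S + 1) T = 0 := by
  have hgood : ∀ q : ℕ, Good (c p) (c (p + q)) T q (dIter c hle j hj p q T) := by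
    intro q
    induction q with
    | zero => exact Good.refl _ _
    | succ q ih => exact Good.step hT ih (hle (p + q)) (j (p + q)) (hj (p + q))
  show Dop (hle (p + S)) (j (p + S)) (hj (p + S)) (dIter c hle j hj p S T) = 0
  exact Good.kill hT (hgood S) (hle (p + S)) (j (p + S)) (hj (p + S))

end GenComplex
end

section
/- In D = 2, the Pauli–Fierz Lagrangian density L = −½(∂_μ h_{νρ})(∂^μ h^{νρ}) + (∂_μ h^μ_ν)(∂_ρ h^{ρν}) − (∂_ν h^μ_μ)(∂_ρ h^{ρν}) + ½(∂_μ h^ν_ν)(∂^μ h^ρ_ρ) is a total derivative, i.e., L = ∂_μ V^μ for some vector field V^μ built bilinearly from h and ∂h. -/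
/-!
STATEMENT 11: In `D = 2` flat (Euclidean) space the Pauli–Fierz Lagrangian
density
`L = −½(∂_μ h_{νρ})(∂^μ h^{νρ}) + (∂_μ h^μ_ν)(∂_ρ h^{ρν}) − (∂_ν h^μ_μ)(∂_ρ h^{ρν})
  + ½(∂_μ h^ν_ν)(∂^μ h^ρ_ρ)`
is a total derivative: `L = ∂_μ V^μ` for a vector field `V^μ` built bilinearly
from `h` and `∂h` with universal constant coefficients.
-/

open scoped BigOperators

/-- Partial derivative `∂_μ` on `ℝ²`. -/
noncomputable def pd2 (μ : Fin 2) (f : (Fin 2 → ℝ) → ℝ) : (Fin 2 → ℝ) → ℝ :=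
  fun x => fderiv ℝ f x (Pi.single μ 1)

/-- Coefficients of the boundary vector `V^μ`:
`V^0 = h₀₀ ∂₁ h₀₁ + h₀₁ ∂₁ h₁₁`, `V^1 = −h₀₀ ∂₀ h₀₁ − h₀₁ ∂₀ h₁₁`. -/
def pfCoeff : Fin 2 → Fin 2 → Fin 2 → Fin 2 → Fin 2 → Fin 2 → ℝ
  | 0, 0, 0, 1, 0, 1 => 1
  | 0, 0, 1, 1, 1, 1 => 1
  | 1, 0, 0, 0, 0, 1 => -1
  | 1, 0, 1, 0, 1, 1 => -1
  | _, _, _, _, _, _ => 0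

lemma pd2_contDiff {f : (Fin 2 → ℝ) → ℝ} (hf : ContDiff ℝ (⊤ : ℕ∞) f) (σ : Fin 2) :
    ContDiff ℝ (⊤ : ℕ∞) (pd2 σ f) := by
  have hf' : ContDiff ℝ (⊤ : ℕ∞) (fderiv ℝ f) := (contDiff_infty_iff_fderiv.mp hf).2
  exact hf'.clm_apply contDiff_const

lemma pd2_comm {f : (Fin 2 → ℝ) → ℝ} (hf : ContDiff ℝ (⊤ : ℕ∞) f) (μ σ : Fin 2)
    (x : Fin 2 → ℝ) : pd2 μ (pd2 σ f) x = pd2 σ (pd2 μ f) x := by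
  have hd : Differentiable ℝ f := hf.differentiable (by norm_num)
  have hf' : ContDiff ℝ (⊤ : ℕ∞) (fderiv ℝ f) := (contDiff_infty_iff_fderiv.mp hf).2
  have hx : HasFDerivAt (fderiv ℝ f) (fderiv ℝ (fderiv ℝ f) x) x :=
    (hf'.differentiable (by norm_num) x).hasFDerivAt
  have key := second_derivative_symmetric (f' := fderiv ℝ f)
    (fun y => (hd y).hasFDerivAt) hx (Pi.single μ 1) (Pi.single σ 1)
  show fderiv ℝ (fun y => fderiv ℝ f y (Pi.single σ 1)) x (Pi.single μ 1)
     = fderiv ℝ (fun y => fderiv ℝ f y (Pi.single μ 1)) x (Pi.single σ 1)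
  rw [fderiv_clm_apply (hf'.differentiable (by norm_num) x) (differentiableAt_const _),
      fderiv_clm_apply (hf'.differentiable (by norm_num) x) (differentiableAt_const _)]
  simpa using key

lemma pd2_mul {f g : (Fin 2 → ℝ) → ℝ} (μ : Fin 2) (x : Fin 2 → ℝ)
    (hf : DifferentiableAt ℝ f x) (hg : DifferentiableAt ℝ g x) :
    pd2 μ (fun y => f y * g y) x = pd2 μ f x * g x + f x * pd2 μ g x := by
  show fderiv ℝ (fun y => f y * g y) x (Pi.single μ 1) = _
  rw [fderiv_fun_mul hf hg]
  simp [pd2]; ring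

lemma pd2_add {f g : (Fin 2 → ℝ) → ℝ} (μ : Fin 2) (x : Fin 2 → ℝ)
    (hf : DifferentiableAt ℝ f x) (hg : DifferentiableAt ℝ g x) :
    pd2 μ (fun y => f y + g y) x = pd2 μ f x + pd2 μ g x := by
  show fderiv ℝ (fun y => f y + g y) x (Pi.single μ 1) = _
  rw [fderiv_fun_add hf hg]; simp [pd2]

lemma pd2_neg {f : (Fin 2 → ℝ) → ℝ} (μ : Fin 2) (x : Fin 2 → ℝ) :
    pd2 μ (fun y => -f y) x = -pd2 μ f x := by
  show fderiv ℝ (fun y => -f y) x (Pi.single μ 1) = _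
  rw [fderiv_fun_neg]; simp [pd2]

set_option maxHeartbeats 2000000 in
theorem pauliFierz_total_derivative_2d :
    ∃ a : Fin 2 → Fin 2 → Fin 2 → Fin 2 → Fin 2 → Fin 2 → ℝ,
      ∀ h : (Fin 2 → ℝ) → Fin 2 → Fin 2 → ℝ,
        (∀ μ ν : Fin 2, ContDiff ℝ (⊤ : ℕ∞) (fun x => h x μ ν)) →
        (∀ (x : Fin 2 → ℝ) (μ ν : Fin 2), h x μ ν = h x ν μ) →
        ∀ x : Fin 2 → ℝ,
          (-(1/2) * ∑ μ : Fin 2, ∑ ν : Fin 2, ∑ ρ : Fin 2,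
              pd2 μ (fun y => h y ν ρ) x * pd2 μ (fun y => h y ν ρ) x)
          + (∑ μ : Fin 2, ∑ ν : Fin 2, ∑ ρ : Fin 2,
              pd2 μ (fun y => h y μ ν) x * pd2 ρ (fun y => h y ρ ν) x)
          - (∑ ν : Fin 2, ∑ μ : Fin 2, ∑ ρ : Fin 2,
              pd2 ν (fun y => h y μ μ) x * pd2 ρ (fun y => h y ρ ν) x)
          + ((1/2) * ∑ μ : Fin 2, ∑ ν : Fin 2, ∑ ρ : Fin 2,
              pd2 μ (fun y => h y ν ν) x * pd2 μ (fun y => h y ρ ρ) x)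
          = ∑ μ : Fin 2,
              pd2 μ (fun y => ∑ ν : Fin 2, ∑ ρ : Fin 2, ∑ σ : Fin 2,
                ∑ τ : Fin 2, ∑ κ : Fin 2,
                  a μ ν ρ σ τ κ * h y ν ρ * pd2 σ (fun z => h z τ κ) y) x := by
  refine ⟨pfCoeff, fun h hC hsym x => ?_⟩
  have cd : ∀ a b : Fin 2, ContDiff ℝ (⊤ : ℕ∞) (fun y => h y a b) :=
    fun a b => (hC a b).of_le (by simp)
  have dh : ∀ a b : Fin 2, DifferentiableAt ℝ (fun y => h y a b) x :=
    fun a b => (cd a b).differentiable (by norm_num) x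
  have dp : ∀ (σ a b : Fin 2), DifferentiableAt ℝ (pd2 σ (fun y => h y a b)) x :=
    fun σ a b => (pd2_contDiff (cd a b) σ).differentiable (by norm_num) x
  have h10 : (fun y => h y 1 0) = (fun y => h y 0 1) := funext fun y => hsym y 1 0
  -- expand the RHS
  have E0 : (fun y => ∑ ν : Fin 2, ∑ ρ : Fin 2, ∑ σ : Fin 2, ∑ τ : Fin 2, ∑ κ : Fin 2,
        pfCoeff 0 ν ρ σ τ κ * h y ν ρ * pd2 σ (fun z => h z τ κ) y)
      = (fun y => h y 0 0 * pd2 1 (fun z => h z 0 1) y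
          + h y 0 1 * pd2 1 (fun z => h z 1 1) y) := by
    funext y
    simp only [Fin.sum_univ_two, pfCoeff]
    ring
  have E1 : (fun y => ∑ ν : Fin 2, ∑ ρ : Fin 2, ∑ σ : Fin 2, ∑ τ : Fin 2, ∑ κ : Fin 2,
        pfCoeff 1 ν ρ σ τ κ * h y ν ρ * pd2 σ (fun z => h z τ κ) y)
      = (fun y => -(h y 0 0 * pd2 0 (fun z => h z 0 1) y
          + h y 0 1 * pd2 0 (fun z => h z 1 1) y)) := by
    funext y
    simp only [Fin.sum_univ_two, pfCoeff]
    ring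
  conv_rhs => rw [Fin.sum_univ_two]
  rw [E0, E1, pd2_neg,
    pd2_add 0 x ((dh 0 0).fun_mul (dp 1 0 1)) ((dh 0 1).fun_mul (dp 1 1 1)),
    pd2_add 1 x ((dh 0 0).fun_mul (dp 0 0 1)) ((dh 0 1).fun_mul (dp 0 1 1)),
    pd2_mul 0 x (dh 0 0) (dp 1 0 1), pd2_mul 0 x (dh 0 1) (dp 1 1 1),
    pd2_mul 1 x (dh 0 0) (dp 0 0 1), pd2_mul 1 x (dh 0 1) (dp 0 1 1),
    pd2_comm (cd 0 1) 1 0 x, pd2_comm (cd 1 1) 1 0 x]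
  simp only [Fin.sum_univ_two]
  rw [h10]
  ring
end

section
/- Let α be a multiform whose components are antisymmetric in two groups of indices of lengths l_i and l_j with l_i + l_j > D in dimension D. If α satisfies the trace-free condition Tr_{ij}(α) = 0 with the nondegenerate metric, then α = 0. More generally (Proposition on trace powers, case m = 0): (Tr_{ij})^{l_i + l_j − D}(α) = 0 is equivalent to (Tr_{ij})^0(*_i *_j α) = 0, i.e., to *_i *_j α = 0, i.e., α = 0. -/
/-!
STATEMENT 16: A biform `α` in `D` dimensions, antisymmetric within each of two
index groups of lengths `l₁ = m+1 ≤ D` and `l₂ = n+1 ≤ D` with `l₁ + l₂ > D`,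
which is trace-free with respect to a nondegenerate symmetric metric `g`
(`Tr₁₂ α = 0`, contracting one index of each group with the inverse metric),
vanishes identically.
-/

open scoped BigOperators
open Equiv Finset

namespace OFB

variable {d : ℕ}

lemma sgn_sq {γ : Type*} [DecidableEq γ] [Fintype γ] (σ : Equiv.Perm γ) :
    ((Equiv.Perm.sign σ : ℤ) : ℝ) * ((Equiv.Perm.sign σ : ℤ) : ℝ) = 1 := by
  rcases Int.units_eq_one_or (Equiv.Perm.sign σ) with h | h <;> rw [h] <;> norm_num

lemma perm_sign_apply {k : ℕ} (f : (Fin k → Fin d) → ℝ)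
    (hf : ∀ (x : Fin k → Fin d) (i j : Fin k), i ≠ j → f (x ∘ Equiv.swap i j) = - f x)
    (σ : Equiv.Perm (Fin k)) :
    ∀ x : Fin k → Fin d, f (x ∘ σ) = ((Equiv.Perm.sign σ : ℤ) : ℝ) * f x := by
  refine Equiv.Perm.swap_induction_on σ ?_ ?_
  · intro x; simp
  · intro π i j hij ih x
    have h : (x ∘ ⇑(Equiv.swap i j * π)) = (x ∘ Equiv.swap i j) ∘ π := rfl
    rw [h, ih, hf x i j hij, Equiv.Perm.sign_mul, Equiv.Perm.sign_swap hij]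
    push_cast
    ring

lemma sum_comp_perm {k : ℕ} (σ : Equiv.Perm (Fin k)) (F : (Fin k → Fin d) → ℝ) :
    ∑ x : Fin k → Fin d, F (x ∘ σ) = ∑ x : Fin k → Fin d, F x := by
  exact Fintype.sum_equiv (Equiv.arrowCongr σ.symm (Equiv.refl (Fin d)))
    (fun x => F (x ∘ σ)) F (fun x => rfl)

lemma sum_cons {k : ℕ} (F : (Fin (k+1) → Fin d) → ℝ) :
    ∑ x : Fin (k+1) → Fin d, F x = ∑ a : Fin d, ∑ x : Fin k → Fin d, F (Fin.cons a x) := by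
  rw [← Equiv.sum_comp (Fin.consEquiv fun _ => Fin d) F]
  rw [Fintype.sum_prod_type]
  rfl

lemma update_eq_cons_comp {k : ℕ} (x : Fin (k+1) → Fin d) (i : Fin (k+1)) (a : Fin d) :
    Function.update x i a = (Fin.cons a (x ∘ i.succAbove)) ∘ (Fin.cycleRange i) := by
  have h : ∀ s : Fin (k+1), Function.update x i a (i.cycleRange.symm s) = (Fin.cons a (x ∘ i.succAbove) : Fin (k+1) → Fin d) s := by
    intro s
    induction s using Fin.cases with
    | zero => rw [Fin.cycleRange_symm_zero]; simp
    | succ u =>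
        rw [Fin.cycleRange_symm_succ, Function.update_of_ne (Fin.succAbove_ne i u)]
        simp
  funext t
  have h2 := h (i.cycleRange t)
  rwa [Equiv.symm_apply_apply] at h2




noncomputable def sg {γ : Type*} [DecidableEq γ] [Fintype γ] (σ : Equiv.Perm γ) : ℝ :=
  ((Equiv.Perm.sign σ : ℤ) : ℝ)

lemma sg_mul {γ : Type*} [DecidableEq γ] [Fintype γ] (σ τ : Equiv.Perm γ) :
    sg (σ * τ) = sg σ * sg τ := by
  simp [sg]

lemma sg_sq {γ : Type*} [DecidableEq γ] [Fintype γ] (σ : Equiv.Perm γ) :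
    sg σ * sg σ = 1 := by
  rcases Int.units_eq_one_or (Equiv.Perm.sign σ) with h | h <;> simp [sg, h]

lemma sg_inv {γ : Type*} [DecidableEq γ] [Fintype γ] (σ : Equiv.Perm γ) :
    sg σ⁻¹ = sg σ := by
  simp [sg]

variable {D m n : ℕ}

noncomputable def Lb (β : (Fin (m+1) → Fin D) → (Fin (n+1) → Fin D) → ℝ)
    (x : Fin (m+2) → Fin D) (y : Fin (n+2) → Fin D) : ℝ :=
  ∑ σ : Equiv.Perm (Fin (m+2)), ∑ τ : Equiv.Perm (Fin (n+2)),
    sg σ * sg τ *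
      ((if x (σ 0) = y (τ 0) then (1:ℝ) else 0) *
        β (fun t => x (σ t.succ)) (fun t => y (τ t.succ)))

lemma coeff_helper (a b c e X : ℝ) (ha : a * a = 1) (hb : b * b = 1) :
    c * e * X = a * b * (a * c * (b * e) * X) := by
  have h : a * b * (a * c * (b * e) * X) = (a*a) * ((b*b) * (c * e * X)) := by ring
  rw [h, ha, hb]; ring

lemma key_reindex (π : Equiv.Perm (Fin (m+2))) (ρ : Equiv.Perm (Fin (n+2)))
    (f : Equiv.Perm (Fin (m+2)) → Equiv.Perm (Fin (n+2)) → ℝ) :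
    (∑ σ : Equiv.Perm (Fin (m+2)), ∑ τ : Equiv.Perm (Fin (n+2)), f (π * σ) (ρ * τ))
      = ∑ σ : Equiv.Perm (Fin (m+2)), ∑ τ : Equiv.Perm (Fin (n+2)), f σ τ := by
  have h1 : ∀ σ, (∑ τ : Equiv.Perm (Fin (n+2)), f σ (ρ * τ)) = ∑ τ, f σ τ := fun σ =>
    Equiv.sum_comp (Equiv.mulLeft ρ) (f σ)
  calc (∑ σ : Equiv.Perm (Fin (m+2)), ∑ τ : Equiv.Perm (Fin (n+2)), f (π * σ) (ρ * τ))
      = ∑ σ : Equiv.Perm (Fin (m+2)), ∑ τ : Equiv.Perm (Fin (n+2)), f σ (ρ * τ) :=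
        Equiv.sum_comp (Equiv.mulLeft π) (fun σ => ∑ τ, f σ (ρ * τ))
    _ = _ := sum_congr rfl fun σ _ => h1 σ

lemma Lb_perm (β : (Fin (m+1) → Fin D) → (Fin (n+1) → Fin D) → ℝ)
    (π : Equiv.Perm (Fin (m+2))) (ρ : Equiv.Perm (Fin (n+2)))
    (x : Fin (m+2) → Fin D) (y : Fin (n+2) → Fin D) :
    Lb β (x ∘ π) (y ∘ ρ) = sg π * sg ρ * Lb β x y := by
  unfold Lb
  calc (∑ σ : Equiv.Perm (Fin (m+2)), ∑ τ : Equiv.Perm (Fin (n+2)),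
        sg σ * sg τ *
          ((if (x ∘ π) (σ 0) = (y ∘ ρ) (τ 0) then (1:ℝ) else 0) *
            β (fun t => (x ∘ π) (σ t.succ)) (fun t => (y ∘ ρ) (τ t.succ))))
      = ∑ σ : Equiv.Perm (Fin (m+2)), ∑ τ : Equiv.Perm (Fin (n+2)),
          sg π * sg ρ * (sg (π * σ) * sg (ρ * τ) *
            ((if x ((π * σ) 0) = y ((ρ * τ) 0) then (1:ℝ) else 0) *
              β (fun t => x ((π * σ) t.succ)) (fun t => y ((ρ * τ) t.succ)))) := by
        refine sum_congr rfl fun σ _ => sum_congr rfl fun τ _ => ?_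
        show sg σ * sg τ *
          ((if x ((π * σ) 0) = y ((ρ * τ) 0) then (1:ℝ) else 0) *
            β (fun t => x ((π * σ) t.succ)) (fun t => y ((ρ * τ) t.succ))) = _
        rw [sg_mul, sg_mul]
        exact coeff_helper _ _ _ _ _ (sg_sq π) (sg_sq ρ)
    _ = ∑ σ : Equiv.Perm (Fin (m+2)), ∑ τ : Equiv.Perm (Fin (n+2)),
          sg π * sg ρ * (sg σ * sg τ *
            ((if x (σ 0) = y (τ 0) then (1:ℝ) else 0) *
              β (fun t => x (σ t.succ)) (fun t => y (τ t.succ)))) :=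
        key_reindex π ρ (fun σ τ => sg π * sg ρ * (sg σ * sg τ *
            ((if x (σ 0) = y (τ 0) then (1:ℝ) else 0) *
              β (fun t => x (σ t.succ)) (fun t => y (τ t.succ)))))
    _ = _ := by simp only [Finset.mul_sum]


lemma sum_swap3 {A B C : Type*} [Fintype A] [Fintype B] [Fintype C] (f : A → B → C → ℝ) :
    ∑ a : A, ∑ b : B, ∑ c : C, f a b c = ∑ b : B, ∑ c : C, ∑ a : A, f a b c := by
  calc ∑ a : A, ∑ b : B, ∑ c : C, f a b c
      = ∑ b : B, ∑ a : A, ∑ c : C, f a b c := Finset.sum_comm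
    _ = ∑ b : B, ∑ c : C, ∑ a : A, f a b c := sum_congr rfl fun b _ => Finset.sum_comm

lemma sum_swap4 {A B C E : Type*} [Fintype A] [Fintype B] [Fintype C] [Fintype E]
    (f : A → B → C → E → ℝ) :
    ∑ a : A, ∑ b : B, ∑ c : C, ∑ e : E, f a b c e
      = ∑ c : C, ∑ e : E, ∑ a : A, ∑ b : B, f a b c e := by
  calc ∑ a : A, ∑ b : B, ∑ c : C, ∑ e : E, f a b c e
      = ∑ a : A, ∑ c : C, ∑ b : B, ∑ e : E, f a b c e :=
        sum_congr rfl fun a _ => Finset.sum_comm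
    _ = ∑ c : C, ∑ a : A, ∑ b : B, ∑ e : E, f a b c e := Finset.sum_comm
    _ = ∑ c : C, ∑ a : A, ∑ e : E, ∑ b : B, f a b c e :=
        sum_congr rfl fun c _ => sum_congr rfl fun a _ => Finset.sum_comm
    _ = ∑ c : C, ∑ e : E, ∑ a : A, ∑ b : B, f a b c e :=
        sum_congr rfl fun c _ => Finset.sum_comm

lemma norm_helper (a b X L : ℝ) (ha : a * a = 1) (hb : b * b = 1) :
    (a * b * X) * (a * b * L) = X * L := by
  have h : (a * b * X) * (a * b * L) = (a*a) * ((b*b) * (X * L)) := by ring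
  rw [h, ha, hb]; ring

lemma gen_reindex (G : (Fin (m+2) → Fin D) → (Fin (n+2) → Fin D) → ℝ)
    (σ : Equiv.Perm (Fin (m+2))) (τ : Equiv.Perm (Fin (n+2))) :
    (∑ x : Fin (m+2) → Fin D, ∑ y : Fin (n+2) → Fin D, G x y)
      = ∑ x : Fin (m+2) → Fin D, ∑ y : Fin (n+2) → Fin D, G (x ∘ ⇑σ⁻¹) (y ∘ ⇑τ⁻¹) := by
  calc (∑ x : Fin (m+2) → Fin D, ∑ y : Fin (n+2) → Fin D, G x y)
      = ∑ x : Fin (m+2) → Fin D, ∑ y : Fin (n+2) → Fin D, G x (y ∘ ⇑τ⁻¹) :=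
        sum_congr rfl fun x _ => (sum_comp_perm τ⁻¹ (G x)).symm
    _ = ∑ x : Fin (m+2) → Fin D, ∑ y : Fin (n+2) → Fin D, G (x ∘ ⇑σ⁻¹) (y ∘ ⇑τ⁻¹) :=
        (sum_comp_perm σ⁻¹ (fun x => ∑ y : Fin (n+2) → Fin D, G x (y ∘ ⇑τ⁻¹))).symm

lemma Lb_norm (β : (Fin (m+1) → Fin D) → (Fin (n+1) → Fin D) → ℝ) :
    ∑ x : Fin (m+2) → Fin D, ∑ y : Fin (n+2) → Fin D, Lb β x y * Lb β x y
      = (Fintype.card (Equiv.Perm (Fin (m+2))) : ℝ) *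
          ((Fintype.card (Equiv.Perm (Fin (n+2))) : ℝ) *
          ∑ x' : Fin (m+1) → Fin D, ∑ y' : Fin (n+1) → Fin D,
            β x' y' * (∑ a : Fin D, Lb β (Fin.cons a x') (Fin.cons a y'))) := by
  have step2 : ∀ (σ : Equiv.Perm (Fin (m+2))) (τ : Equiv.Perm (Fin (n+2))),
      (∑ x : Fin (m+2) → Fin D, ∑ y : Fin (n+2) → Fin D,
        (sg σ * sg τ * ((if x (σ 0) = y (τ 0) then (1:ℝ) else 0) *
          β (fun t => x (σ t.succ)) (fun t => y (τ t.succ)))) * Lb β x y)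
      = ∑ x : Fin (m+2) → Fin D, ∑ y : Fin (n+2) → Fin D,
          (if x 0 = y 0 then (1:ℝ) else 0) *
            β (fun t => x t.succ) (fun t => y t.succ) * Lb β x y := by
    intro σ τ
    have e1 : ∀ (x : Fin (m+2) → Fin D) (y : Fin (n+2) → Fin D),
        (sg σ * sg τ * ((if (x ∘ ⇑σ⁻¹) (σ 0) = (y ∘ ⇑τ⁻¹) (τ 0) then (1:ℝ) else 0) *
          β (fun t => (x ∘ ⇑σ⁻¹) (σ t.succ)) (fun t => (y ∘ ⇑τ⁻¹) (τ t.succ)))) *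
            Lb β (x ∘ ⇑σ⁻¹) (y ∘ ⇑τ⁻¹)
        = (if x 0 = y 0 then (1:ℝ) else 0) *
            β (fun t => x t.succ) (fun t => y t.succ) * Lb β x y := by
      intro x y
      have hx0 : (x ∘ ⇑σ⁻¹) (σ 0) = x 0 := by simp
      have hy0 : (y ∘ ⇑τ⁻¹) (τ 0) = y 0 := by simp
      have hx1 : (fun t => (x ∘ ⇑σ⁻¹) (σ t.succ)) = fun t : Fin (m+1) => x t.succ := by
        funext t; simp
      have hy1 : (fun t => (y ∘ ⇑τ⁻¹) (τ t.succ)) = fun t : Fin (n+1) => y t.succ := by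
        funext t; simp
      rw [hx0, hy0, hx1, hy1, Lb_perm, sg_inv, sg_inv]
      exact norm_helper _ _ _ _ (sg_sq σ) (sg_sq τ)
    exact (gen_reindex (fun x y =>
        (sg σ * sg τ * ((if x (σ 0) = y (τ 0) then (1:ℝ) else 0) *
          β (fun t => x (σ t.succ)) (fun t => y (τ t.succ)))) * Lb β x y) σ τ).trans
      (sum_congr rfl fun x _ => sum_congr rfl fun y _ => e1 x y)
  have step3 : (∑ x : Fin (m+2) → Fin D, ∑ y : Fin (n+2) → Fin D,
        (if x 0 = y 0 then (1:ℝ) else 0) *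
          β (fun t => x t.succ) (fun t => y t.succ) * Lb β x y)
      = ∑ x' : Fin (m+1) → Fin D, ∑ y' : Fin (n+1) → Fin D,
          β x' y' * (∑ a : Fin D, Lb β (Fin.cons a x') (Fin.cons a y')) := by
    rw [sum_cons (fun x => ∑ y : Fin (n+2) → Fin D,
        (if x 0 = y 0 then (1:ℝ) else 0) *
          β (fun t => x t.succ) (fun t => y t.succ) * Lb β x y)]
    have inner : ∀ (a : Fin D) (x' : Fin (m+1) → Fin D),
        (∑ y : Fin (n+2) → Fin D,
          (if (Fin.cons a x' : Fin (m+2) → Fin D) 0 = y 0 then (1:ℝ) else 0) *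
            β (fun t => (Fin.cons a x' : Fin (m+2) → Fin D) t.succ) (fun t => y t.succ) * Lb β (Fin.cons a x') y)
        = ∑ y' : Fin (n+1) → Fin D, β x' y' * Lb β (Fin.cons a x') (Fin.cons a y') := by
      intro a x'
      rw [sum_cons (fun y => (if (Fin.cons a x' : Fin (m+2) → Fin D) 0 = y 0 then (1:ℝ) else 0) *
            β (fun t => (Fin.cons a x' : Fin (m+2) → Fin D) t.succ) (fun t => y t.succ) * Lb β (Fin.cons a x') y)]
      rw [Finset.sum_comm]
      refine sum_congr rfl fun y' _ => ?_
      simp only [Fin.cons_zero, Fin.cons_succ]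
      have hx : (fun t : Fin (m+1) => (Fin.cons a x' : Fin (m+2) → Fin D) t.succ) = x' := by
        funext t; simp
      have hy : ∀ b, (fun t : Fin (n+1) => (Fin.cons b y' : Fin (n+2) → Fin D) t.succ) = y' := by
        intro b; funext t; simp
      simp only [hx, hy, ite_mul, one_mul, zero_mul]
      rw [Finset.sum_ite_eq]
      simp
    calc (∑ a : Fin D, ∑ x' : Fin (m+1) → Fin D, ∑ y : Fin (n+2) → Fin D,
        (if (Fin.cons a x' : Fin (m+2) → Fin D) 0 = y 0 then (1:ℝ) else 0) *
          β (fun t => (Fin.cons a x' : Fin (m+2) → Fin D) t.succ) (fun t => y t.succ) * Lb β (Fin.cons a x') y)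
        = ∑ a : Fin D, ∑ x' : Fin (m+1) → Fin D, ∑ y' : Fin (n+1) → Fin D,
            β x' y' * Lb β (Fin.cons a x') (Fin.cons a y') :=
          sum_congr rfl fun a _ => sum_congr rfl fun x' _ => inner a x'
      _ = ∑ x' : Fin (m+1) → Fin D, ∑ y' : Fin (n+1) → Fin D, ∑ a : Fin D,
            β x' y' * Lb β (Fin.cons a x') (Fin.cons a y') := sum_swap3 _
      _ = _ := sum_congr rfl fun x' _ => sum_congr rfl fun y' _ => (Finset.mul_sum _ _ _).symm
  calc ∑ x : Fin (m+2) → Fin D, ∑ y : Fin (n+2) → Fin D, Lb β x y * Lb β x y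
      = ∑ x : Fin (m+2) → Fin D, ∑ y : Fin (n+2) → Fin D,
          ∑ σ : Equiv.Perm (Fin (m+2)), ∑ τ : Equiv.Perm (Fin (n+2)),
            (sg σ * sg τ * ((if x (σ 0) = y (τ 0) then (1:ℝ) else 0) *
              β (fun t => x (σ t.succ)) (fun t => y (τ t.succ)))) * Lb β x y := by
        refine sum_congr rfl fun x _ => sum_congr rfl fun y _ => ?_
        conv_lhs => rw [Lb]
        rw [Finset.sum_mul]
        exact sum_congr rfl fun σ _ => Finset.sum_mul _ _ _
    _ = ∑ σ : Equiv.Perm (Fin (m+2)), ∑ τ : Equiv.Perm (Fin (n+2)),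
          ∑ x : Fin (m+2) → Fin D, ∑ y : Fin (n+2) → Fin D,
            (sg σ * sg τ * ((if x (σ 0) = y (τ 0) then (1:ℝ) else 0) *
              β (fun t => x (σ t.succ)) (fun t => y (τ t.succ)))) * Lb β x y := sum_swap4 _
    _ = ∑ σ : Equiv.Perm (Fin (m+2)), ∑ τ : Equiv.Perm (Fin (n+2)),
          ∑ x' : Fin (m+1) → Fin D, ∑ y' : Fin (n+1) → Fin D,
            β x' y' * (∑ a : Fin D, Lb β (Fin.cons a x') (Fin.cons a y')) :=
        sum_congr rfl fun σ _ => sum_congr rfl fun τ _ => (step2 σ τ).trans step3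
    _ = _ := by
        rw [Finset.sum_const, Finset.sum_const]
        simp [card_univ, nsmul_eq_mul]

lemma consDF {k : ℕ} (x' : Fin (k+1) → Fin d) (a : Fin d) (i : Fin (k+2))
    (σ' : Equiv.Perm (Fin (k+1))) :
    (fun t : Fin (k+1) =>
        (Fin.cons a x' : Fin (k+2) → Fin d) (Equiv.Perm.decomposeFin.symm (i, σ') t.succ))
      = (Fin.cases x' (fun u => Function.update x' u a) i : Fin (k+1) → Fin d) ∘ ⇑σ' := by
  funext t
  simp only [Equiv.Perm.decomposeFin_symm_apply_succ]
  induction i using Fin.cases with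
  | zero => simp
  | succ u =>
      by_cases h : σ' t = u
      · subst h; simp [Equiv.swap_apply_right, Function.update_self]
      · have h2 : (σ' t).succ ≠ u.succ := fun hc => h (Fin.succ_injective _ hc)
        have h3 : (σ' t).succ ≠ 0 := Fin.succ_ne_zero _
        rw [Equiv.swap_apply_of_ne_of_ne h3 h2]
        simp [h, Function.update_of_ne]

lemma sg_decomposeFin {k : ℕ} (i : Fin (k+2)) (σ' : Equiv.Perm (Fin (k+1))) :
    sg (Equiv.Perm.decomposeFin.symm (i, σ')) = (if i = 0 then (1:ℝ) else -1) * sg σ' := by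
  unfold sg
  rw [Equiv.Perm.decomposeFin.symm_sign]
  split <;> simp

lemma key_df {p q : ℕ} (f : Equiv.Perm (Fin (p+2)) → Equiv.Perm (Fin (q+2)) → ℝ) :
    (∑ σ : Equiv.Perm (Fin (p+2)), ∑ τ : Equiv.Perm (Fin (q+2)), f σ τ)
      = ∑ i : Fin (p+2), ∑ σ' : Equiv.Perm (Fin (p+1)), ∑ j : Fin (q+2),
          ∑ τ' : Equiv.Perm (Fin (q+1)),
          f (Equiv.Perm.decomposeFin.symm (i, σ')) (Equiv.Perm.decomposeFin.symm (j, τ')) := by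
  rw [← Equiv.sum_comp (Equiv.Perm.decomposeFin.symm)
      (fun σ => ∑ τ : Equiv.Perm (Fin (q+2)), f σ τ)]
  rw [Fintype.sum_prod_type]
  refine sum_congr rfl fun i _ => sum_congr rfl fun σ' _ => ?_
  rw [← Equiv.sum_comp (Equiv.Perm.decomposeFin.symm) (f _)]
  rw [Fintype.sum_prod_type]

noncomputable def Wt (β : (Fin (m+1) → Fin D) → (Fin (n+1) → Fin D) → ℝ)
    (x' : Fin (m+1) → Fin D) (y' : Fin (n+1) → Fin D)
    (a : Fin D) (i : Fin (m+2)) (j : Fin (n+2)) : ℝ :=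
  (if i = 0 then (1:ℝ) else -1) * (if j = 0 then (1:ℝ) else -1) *
    ((if (Fin.cons a x' : Fin (m+2) → Fin D) i = (Fin.cons a y' : Fin (n+2) → Fin D) j
        then (1:ℝ) else 0) *
      β (Fin.cases x' (fun u => Function.update x' u a) i : Fin (m+1) → Fin D)
        (Fin.cases y' (fun u => Function.update y' u a) j : Fin (n+1) → Fin D))

lemma coeff_helper2 (sa sb ci cj I B : ℝ) (ha : sa*sa=1) (hb : sb*sb=1) :
    (ci * sa) * (cj * sb) * (I * (sa * (sb * B))) = ci * cj * (I * B) := by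
  have h : (ci * sa) * (cj * sb) * (I * (sa * (sb * B)))
      = (sa*sa) * ((sb*sb) * (ci * cj * (I * B))) := by ring
  rw [h, ha, hb]; ring

lemma Lb_cons_eq_W (β : (Fin (m+1) → Fin D) → (Fin (n+1) → Fin D) → ℝ)
    (hP1 : ∀ (σ : Equiv.Perm (Fin (m+1))) (x : Fin (m+1) → Fin D) (y : Fin (n+1) → Fin D),
        β (x ∘ ⇑σ) y = sg σ * β x y)
    (hP2 : ∀ (τ : Equiv.Perm (Fin (n+1))) (x : Fin (m+1) → Fin D) (y : Fin (n+1) → Fin D),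
        β x (y ∘ ⇑τ) = sg τ * β x y)
    (x' : Fin (m+1) → Fin D) (y' : Fin (n+1) → Fin D) (a : Fin D) :
    Lb β (Fin.cons a x') (Fin.cons a y')
      = (Fintype.card (Equiv.Perm (Fin (m+1))) : ℝ) *
          ((Fintype.card (Equiv.Perm (Fin (n+1))) : ℝ) *
            ∑ i : Fin (m+2), ∑ j : Fin (n+2), Wt β x' y' a i j) := by
  conv_lhs => rw [Lb]
  rw [key_df (fun σ τ => sg σ * sg τ *
      ((if (Fin.cons a x' : Fin (m+2) → Fin D) (σ 0) = (Fin.cons a y' : Fin (n+2) → Fin D) (τ 0)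
          then (1:ℝ) else 0) *
        β (fun t => (Fin.cons a x' : Fin (m+2) → Fin D) (σ t.succ))
          (fun t => (Fin.cons a y' : Fin (n+2) → Fin D) (τ t.succ))))]
  have hterm : ∀ (i : Fin (m+2)) (σ' : Equiv.Perm (Fin (m+1))) (j : Fin (n+2))
      (τ' : Equiv.Perm (Fin (n+1))),
      sg (Equiv.Perm.decomposeFin.symm (i, σ')) * sg (Equiv.Perm.decomposeFin.symm (j, τ')) *
        ((if (Fin.cons a x' : Fin (m+2) → Fin D) (Equiv.Perm.decomposeFin.symm (i, σ') 0)
              = (Fin.cons a y' : Fin (n+2) → Fin D) (Equiv.Perm.decomposeFin.symm (j, τ') 0)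
            then (1:ℝ) else 0) *
          β (fun t => (Fin.cons a x' : Fin (m+2) → Fin D)
                (Equiv.Perm.decomposeFin.symm (i, σ') t.succ))
            (fun t => (Fin.cons a y' : Fin (n+2) → Fin D)
                (Equiv.Perm.decomposeFin.symm (j, τ') t.succ)))
      = Wt β x' y' a i j := by
    intro i σ' j τ'
    rw [Equiv.Perm.decomposeFin_symm_apply_zero, Equiv.Perm.decomposeFin_symm_apply_zero]
    rw [consDF x' a i σ', consDF y' a j τ']
    rw [sg_decomposeFin, sg_decomposeFin, hP1, hP2]
    unfold Wt
    exact coeff_helper2 _ _ _ _ _ _ (sg_sq σ') (sg_sq τ')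
  calc (∑ i : Fin (m+2), ∑ σ' : Equiv.Perm (Fin (m+1)), ∑ j : Fin (n+2),
        ∑ τ' : Equiv.Perm (Fin (n+1)),
        sg (Equiv.Perm.decomposeFin.symm (i, σ')) * sg (Equiv.Perm.decomposeFin.symm (j, τ')) *
        ((if (Fin.cons a x' : Fin (m+2) → Fin D) (Equiv.Perm.decomposeFin.symm (i, σ') 0)
              = (Fin.cons a y' : Fin (n+2) → Fin D) (Equiv.Perm.decomposeFin.symm (j, τ') 0)
            then (1:ℝ) else 0) *
          β (fun t => (Fin.cons a x' : Fin (m+2) → Fin D)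
                (Equiv.Perm.decomposeFin.symm (i, σ') t.succ))
            (fun t => (Fin.cons a y' : Fin (n+2) → Fin D)
                (Equiv.Perm.decomposeFin.symm (j, τ') t.succ))))
      = ∑ i : Fin (m+2), ∑ σ' : Equiv.Perm (Fin (m+1)), ∑ j : Fin (n+2),
          ∑ τ' : Equiv.Perm (Fin (n+1)), Wt β x' y' a i j :=
        sum_congr rfl fun i _ => sum_congr rfl fun σ' _ => sum_congr rfl fun j _ =>
          sum_congr rfl fun τ' _ => hterm i σ' j τ'
    _ = ∑ i : Fin (m+2), ∑ σ' : Equiv.Perm (Fin (m+1)),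
          (Fintype.card (Equiv.Perm (Fin (n+1))) : ℝ) * ∑ j : Fin (n+2), Wt β x' y' a i j := by
        refine sum_congr rfl fun i _ => sum_congr rfl fun σ' _ => ?_
        rw [Finset.mul_sum]
        exact sum_congr rfl fun j _ => by
          rw [Finset.sum_const, card_univ, nsmul_eq_mul]
    _ = ∑ i : Fin (m+2), (Fintype.card (Equiv.Perm (Fin (m+1))) : ℝ) *
          ((Fintype.card (Equiv.Perm (Fin (n+1))) : ℝ) * ∑ j : Fin (n+2), Wt β x' y' a i j) := by
        refine sum_congr rfl fun i _ => ?_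
        rw [Finset.sum_const, card_univ, nsmul_eq_mul]
    _ = _ := by
        simp only [Finset.mul_sum]

lemma W_trace (β : (Fin (m+1) → Fin D) → (Fin (n+1) → Fin D) → ℝ)
    (hP1 : ∀ (σ : Equiv.Perm (Fin (m+1))) (x : Fin (m+1) → Fin D) (y : Fin (n+1) → Fin D),
        β (x ∘ ⇑σ) y = sg σ * β x y)
    (hP2 : ∀ (τ : Equiv.Perm (Fin (n+1))) (x : Fin (m+1) → Fin D) (y : Fin (n+1) → Fin D),
        β x (y ∘ ⇑τ) = sg τ * β x y)
    (htr : ∀ (u : Fin m → Fin D) (v : Fin n → Fin D),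
        ∑ a : Fin D, β (Fin.cons a u) (Fin.cons a v) = 0)
    (x' : Fin (m+1) → Fin D) (y' : Fin (n+1) → Fin D) :
    ∑ a : Fin D, ∑ i : Fin (m+2), ∑ j : Fin (n+2), Wt β x' y' a i j
      = ((D:ℝ) - ((m:ℝ)+1) - ((n:ℝ)+1)) * β x' y' := by
  have trace_update : ∀ (k : Fin (m+1)) (l : Fin (n+1)),
      ∑ a : Fin D, β (Function.update x' k a) (Function.update y' l a) = 0 := by
    intro k l
    have e : ∀ a : Fin D, β (Function.update x' k a) (Function.update y' l a)
        = sg (Fin.cycleRange k) * (sg (Fin.cycleRange l) *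
            β (Fin.cons a (x' ∘ k.succAbove)) (Fin.cons a (y' ∘ l.succAbove))) := by
      intro a
      rw [update_eq_cons_comp x' k a, update_eq_cons_comp y' l a, hP1, hP2]
    calc ∑ a : Fin D, β (Function.update x' k a) (Function.update y' l a)
        = ∑ a : Fin D, sg (Fin.cycleRange k) * (sg (Fin.cycleRange l) *
            β (Fin.cons a (x' ∘ k.succAbove)) (Fin.cons a (y' ∘ l.succAbove))) :=
          Finset.sum_congr rfl fun a _ => e a
      _ = sg (Fin.cycleRange k) * ∑ a : Fin D, sg (Fin.cycleRange l) *
            β (Fin.cons a (x' ∘ k.succAbove)) (Fin.cons a (y' ∘ l.succAbove)) :=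
          (Finset.mul_sum _ _ _).symm
      _ = sg (Fin.cycleRange k) * (sg (Fin.cycleRange l) * ∑ a : Fin D,
            β (Fin.cons a (x' ∘ k.succAbove)) (Fin.cons a (y' ∘ l.succAbove))) := by
          rw [← Finset.mul_sum]
      _ = 0 := by rw [htr]; ring
  have V00 : ∑ a : Fin D, Wt β x' y' a 0 0 = (D:ℝ) * β x' y' := by
    have e : ∀ a : Fin D, Wt β x' y' a 0 0 = β x' y' := by
      intro a; simp [Wt]
    rw [Finset.sum_congr rfl fun a _ => e a, Finset.sum_const, card_univ, Fintype.card_fin,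
      nsmul_eq_mul]
  have V0s : ∀ l : Fin (n+1), ∑ a : Fin D, Wt β x' y' a 0 l.succ = -β x' y' := by
    intro l
    have e : ∀ a : Fin D, Wt β x' y' a 0 l.succ
        = -(if a = y' l then β x' (Function.update y' l a) else 0) := by
      intro a
      simp [Wt, Fin.succ_ne_zero, ite_mul, mul_ite]
      split <;> simp
    rw [Finset.sum_congr rfl fun a _ => e a, Finset.sum_neg_distrib,
      Finset.sum_ite_eq' univ (y' l) (fun a => β x' (Function.update y' l a))]
    simp [Function.update_eq_self]
  have Vs0 : ∀ k : Fin (m+1), ∑ a : Fin D, Wt β x' y' a k.succ 0 = -β x' y' := by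
    intro k
    have e : ∀ a : Fin D, Wt β x' y' a k.succ 0
        = -(if x' k = a then β (Function.update x' k a) y' else 0) := by
      intro a
      simp [Wt, Fin.succ_ne_zero, ite_mul, mul_ite]
      split <;> simp
    rw [Finset.sum_congr rfl fun a _ => e a, Finset.sum_neg_distrib,
      Finset.sum_ite_eq univ (x' k) (fun a => β (Function.update x' k a) y')]
    simp [Function.update_eq_self]
  have Vss : ∀ (k : Fin (m+1)) (l : Fin (n+1)),
      ∑ a : Fin D, Wt β x' y' a k.succ l.succ = 0 := by
    intro k l
    have e : ∀ a : Fin D, Wt β x' y' a k.succ l.succ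
        = if x' k = y' l then β (Function.update x' k a) (Function.update y' l a) else 0 := by
      intro a
      simp [Wt, Fin.succ_ne_zero, ite_mul, mul_ite]
    rw [Finset.sum_congr rfl fun a _ => e a]
    by_cases hc : x' k = y' l
    · simp only [if_pos hc]
      exact trace_update k l
    · simp [hc]
  rw [sum_swap3 (fun (a : Fin D) (i : Fin (m+2)) (j : Fin (n+2)) => Wt β x' y' a i j)]
  have h1 : (∑ j : Fin (n+2), ∑ a : Fin D, Wt β x' y' a 0 j)
      = (D:ℝ) * β x' y' - ((n:ℝ)+1) * β x' y' := by
    rw [Fin.sum_univ_succ, V00, Finset.sum_congr rfl fun l _ => V0s l, Finset.sum_const,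
      card_univ, Fintype.card_fin, nsmul_eq_mul]
    push_cast; ring
  have h2 : ∀ k : Fin (m+1), (∑ j : Fin (n+2), ∑ a : Fin D, Wt β x' y' a k.succ j)
      = -β x' y' := by
    intro k
    rw [Fin.sum_univ_succ, Vs0 k, Finset.sum_congr rfl fun l _ => Vss k l]
    simp
  rw [Fin.sum_univ_succ, h1, Finset.sum_congr rfl fun k _ => h2 k, Finset.sum_const, card_univ,
    Fintype.card_fin, nsmul_eq_mul]
  push_cast; ring

lemma Lb_trace (β : (Fin (m+1) → Fin D) → (Fin (n+1) → Fin D) → ℝ)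
    (hP1 : ∀ (σ : Equiv.Perm (Fin (m+1))) (x : Fin (m+1) → Fin D) (y : Fin (n+1) → Fin D),
        β (x ∘ ⇑σ) y = sg σ * β x y)
    (hP2 : ∀ (τ : Equiv.Perm (Fin (n+1))) (x : Fin (m+1) → Fin D) (y : Fin (n+1) → Fin D),
        β x (y ∘ ⇑τ) = sg τ * β x y)
    (htr : ∀ (u : Fin m → Fin D) (v : Fin n → Fin D),
        ∑ a : Fin D, β (Fin.cons a u) (Fin.cons a v) = 0)
    (x' : Fin (m+1) → Fin D) (y' : Fin (n+1) → Fin D) :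
    ∑ a : Fin D, Lb β (Fin.cons a x') (Fin.cons a y')
      = (Fintype.card (Equiv.Perm (Fin (m+1))) : ℝ) *
          ((Fintype.card (Equiv.Perm (Fin (n+1))) : ℝ) *
            (((D:ℝ) - ((m:ℝ)+1) - ((n:ℝ)+1)) * β x' y')) := by
  rw [Finset.sum_congr rfl fun a _ => Lb_cons_eq_W β hP1 hP2 x' y' a]
  rw [← Finset.mul_sum]
  congr 1
  rw [← Finset.mul_sum]
  congr 1
  exact W_trace β hP1 hP2 htr x' y'

lemma peel {c x : ℝ} (hc : 0 < c) (h : 0 ≤ c * x) : 0 ≤ x := by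
  by_contra hx
  push_neg at hx
  nlinarith

theorem aux {D m n : ℕ} (hgt : D < (m + 1) + (n + 1))
    (β : (Fin (m+1) → Fin D) → (Fin (n+1) → Fin D) → ℝ)
    (hB1 : ∀ (x : Fin (m+1) → Fin D) (y : Fin (n+1) → Fin D) (i j : Fin (m+1)),
        i ≠ j → β (x ∘ Equiv.swap i j) y = - β x y)
    (hB2 : ∀ (x : Fin (m+1) → Fin D) (y : Fin (n+1) → Fin D) (i j : Fin (n+1)),
        i ≠ j → β x (y ∘ Equiv.swap i j) = - β x y)
    (htr : ∀ (u : Fin m → Fin D) (v : Fin n → Fin D),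
        ∑ a : Fin D, β (Fin.cons a u) (Fin.cons a v) = 0) :
    ∀ x y, β x y = 0 := by
  have hP1 : ∀ (σ : Equiv.Perm (Fin (m+1))) (x : Fin (m+1) → Fin D) (y : Fin (n+1) → Fin D),
      β (x ∘ ⇑σ) y = sg σ * β x y := fun σ x y =>
    perm_sign_apply (fun x => β x y) (fun x i j h => hB1 x y i j h) σ x
  have hP2 : ∀ (τ : Equiv.Perm (Fin (n+1))) (x : Fin (m+1) → Fin D) (y : Fin (n+1) → Fin D),
      β x (y ∘ ⇑τ) = sg τ * β x y := fun τ x y =>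
    perm_sign_apply (fun y => β x y) (fun y i j h => hB2 x y i j h) τ y
  have key : ∑ x : Fin (m+2) → Fin D, ∑ y : Fin (n+2) → Fin D, Lb β x y * Lb β x y
      = (Fintype.card (Equiv.Perm (Fin (m+2))) : ℝ) *
          ((Fintype.card (Equiv.Perm (Fin (n+2))) : ℝ) *
            ((Fintype.card (Equiv.Perm (Fin (m+1))) : ℝ) *
              ((Fintype.card (Equiv.Perm (Fin (n+1))) : ℝ) *
                (((D:ℝ) - ((m:ℝ)+1) - ((n:ℝ)+1)) *
                  ∑ x' : Fin (m+1) → Fin D, ∑ y' : Fin (n+1) → Fin D,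
                    β x' y' * β x' y')))) := by
    rw [Lb_norm β]
    congr 1
    congr 1
    calc ∑ x' : Fin (m+1) → Fin D, ∑ y' : Fin (n+1) → Fin D,
          β x' y' * (∑ a : Fin D, Lb β (Fin.cons a x') (Fin.cons a y'))
        = ∑ x' : Fin (m+1) → Fin D, ∑ y' : Fin (n+1) → Fin D,
            (Fintype.card (Equiv.Perm (Fin (m+1))) : ℝ) *
              ((Fintype.card (Equiv.Perm (Fin (n+1))) : ℝ) *
                (((D:ℝ) - ((m:ℝ)+1) - ((n:ℝ)+1)) * (β x' y' * β x' y'))) := by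
          refine sum_congr rfl fun x' _ => sum_congr rfl fun y' _ => ?_
          rw [Lb_trace β hP1 hP2 htr x' y']
          ring
      _ = _ := by simp only [Finset.mul_sum]
  have hpos : (0:ℝ) ≤ ∑ x : Fin (m+2) → Fin D, ∑ y : Fin (n+2) → Fin D, Lb β x y * Lb β x y :=
    Finset.sum_nonneg fun x _ => Finset.sum_nonneg fun y _ => mul_self_nonneg _
  have hNnn : (0:ℝ) ≤ ∑ x' : Fin (m+1) → Fin D, ∑ y' : Fin (n+1) → Fin D, β x' y' * β x' y' :=
    Finset.sum_nonneg fun x _ => Finset.sum_nonneg fun y _ => mul_self_nonneg _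
  have hc0 : ((D:ℝ) - ((m:ℝ)+1) - ((n:ℝ)+1)) < 0 := by
    have h : (D:ℝ) < ((m:ℝ)+1) + ((n:ℝ)+1) := by exact_mod_cast hgt
    linarith
  have cpos : ∀ k : ℕ, (0:ℝ) < (Fintype.card (Equiv.Perm (Fin k)) : ℝ) := by
    intro k
    exact_mod_cast Fintype.card_pos
  have step : (0:ℝ) ≤ (((D:ℝ) - ((m:ℝ)+1) - ((n:ℝ)+1)) *
      ∑ x' : Fin (m+1) → Fin D, ∑ y' : Fin (n+1) → Fin D, β x' y' * β x' y') := by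
    refine peel (cpos (n+1)) (peel (cpos (m+1)) (peel (cpos (n+2)) (peel (cpos (m+2)) ?_)))
    rw [← key]
    exact hpos
  have hN0 : (∑ x' : Fin (m+1) → Fin D, ∑ y' : Fin (n+1) → Fin D, β x' y' * β x' y') = 0 := by
    nlinarith
  intro x y
  have h1 : ∀ x' : Fin (m+1) → Fin D, (0:ℝ) ≤ ∑ y' : Fin (n+1) → Fin D, β x' y' * β x' y' :=
    fun x' => Finset.sum_nonneg fun y' _ => mul_self_nonneg _
  have h2 : (∑ y' : Fin (n+1) → Fin D, β x y' * β x y')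
      ≤ ∑ x' : Fin (m+1) → Fin D, ∑ y' : Fin (n+1) → Fin D, β x' y' * β x' y' :=
    Finset.single_le_sum (f := fun x' => ∑ y' : Fin (n+1) → Fin D, β x' y' * β x' y')
      (fun x' _ => h1 x') (mem_univ x)
  have h3 : β x y * β x y ≤ ∑ y' : Fin (n+1) → Fin D, β x y' * β x y' :=
    Finset.single_le_sum (f := fun y' => β x y' * β x y')
      (fun y' _ => mul_self_nonneg _) (mem_univ y)
  nlinarith [mul_self_nonneg (β x y)]

lemma sum_fun_prod : ∀ {q : ℕ} (f : Fin q → Fin d → ℝ),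
    ∑ b : Fin q → Fin d, ∏ k, f k (b k) = ∏ k, ∑ t, f k t := by
  intro q
  induction q with
  | zero => intro f; simp
  | succ q ih =>
      intro f
      rw [sum_cons (fun b => ∏ k, f k (b k))]
      have e2 : ∀ a : Fin d,
          (∑ b : Fin q → Fin d, ∏ k, f k ((Fin.cons a b : Fin (q+1) → Fin d) k))
            = f 0 a * ∏ k : Fin q, ∑ t : Fin d, f k.succ t := by
        intro a
        have e : ∀ b : Fin q → Fin d,
            (∏ k, f k ((Fin.cons a b : Fin (q+1) → Fin d) k))
              = f 0 a * ∏ k : Fin q, f k.succ (b k) := by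
          intro b
          rw [Fin.prod_univ_succ]
          simp
        calc (∑ b : Fin q → Fin d, ∏ k, f k ((Fin.cons a b : Fin (q+1) → Fin d) k))
            = ∑ b : Fin q → Fin d, f 0 a * ∏ k : Fin q, f k.succ (b k) :=
              sum_congr rfl fun b _ => e b
          _ = f 0 a * ∑ b : Fin q → Fin d, ∏ k : Fin q, f k.succ (b k) := (Finset.mul_sum _ _ _).symm
          _ = f 0 a * ∏ k : Fin q, ∑ t : Fin d, f k.succ t := by rw [ih (fun k t => f k.succ t)]
      calc (∑ a : Fin d, ∑ b : Fin q → Fin d, ∏ k, f k ((Fin.cons a b : Fin (q+1) → Fin d) k))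
          = ∑ a : Fin d, f 0 a * ∏ k : Fin q, ∑ t : Fin d, f k.succ t := sum_congr rfl fun a _ => e2 a
        _ = (∑ a : Fin d, f 0 a) * ∏ k : Fin q, ∑ t : Fin d, f k.succ t := (Finset.sum_mul _ _ _).symm
        _ = ∏ k, ∑ t, f k t := by rw [Fin.prod_univ_succ]


noncomputable def Ct {D m n : ℕ} (g : Matrix (Fin D) (Fin D) ℝ)
    (α : (Fin (m+1) → Fin D) → (Fin (n+1) → Fin D) → ℝ)
    (x : Fin (m+1) → Fin D) (y : Fin (n+1) → Fin D) : ℝ :=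
  ∑ b : Fin (n+1) → Fin D, (∏ k, g (y k) (b k)) * α x b

lemma Ct_antisym1 {D m n : ℕ} (g : Matrix (Fin D) (Fin D) ℝ)
    (α : (Fin (m+1) → Fin D) → (Fin (n+1) → Fin D) → ℝ)
    (hA1 : ∀ (x : Fin (m+1) → Fin D) (y : Fin (n+1) → Fin D) (i j : Fin (m+1)),
        i ≠ j → α (x ∘ Equiv.swap i j) y = - α x y) :
    ∀ (x : Fin (m+1) → Fin D) (y : Fin (n+1) → Fin D) (i j : Fin (m+1)),
      i ≠ j → Ct g α (x ∘ Equiv.swap i j) y = - Ct g α x y := by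
  intro x y i j hij
  unfold Ct
  rw [← Finset.sum_neg_distrib]
  refine sum_congr rfl fun b _ => ?_
  rw [hA1 x b i j hij]; ring

lemma Ct_antisym2 {D m n : ℕ} (g : Matrix (Fin D) (Fin D) ℝ)
    (α : (Fin (m+1) → Fin D) → (Fin (n+1) → Fin D) → ℝ)
    (hA2 : ∀ (x : Fin (m+1) → Fin D) (y : Fin (n+1) → Fin D) (i j : Fin (n+1)),
        i ≠ j → α x (y ∘ Equiv.swap i j) = - α x y) :
    ∀ (x : Fin (m+1) → Fin D) (y : Fin (n+1) → Fin D) (i j : Fin (n+1)),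
      i ≠ j → Ct g α x (y ∘ Equiv.swap i j) = - Ct g α x y := by
  intro x y i j hij
  unfold Ct
  rw [← sum_comp_perm (Equiv.swap i j)
      (fun b => (∏ k, g ((y ∘ Equiv.swap i j) k) (b k)) * α x b)]
  rw [← Finset.sum_neg_distrib]
  refine sum_congr rfl fun b _ => ?_
  show (∏ k, g ((y ∘ Equiv.swap i j) k) ((b ∘ ⇑(Equiv.swap i j)) k)) *
      α x (b ∘ ⇑(Equiv.swap i j)) = -((∏ k, g (y k) (b k)) * α x b)
  have hprod : (∏ k, g ((y ∘ Equiv.swap i j) k) ((b ∘ ⇑(Equiv.swap i j)) k))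
      = ∏ k, g (y k) (b k) := by
    simpa [Function.comp] using Equiv.prod_comp (Equiv.swap i j) (fun u => g (y u) (b u))
  rw [hprod, hA2 x b i j hij]; ring

end OFB

open scoped BigOperators

theorem overfilled_traceless_biform_eq_zero (D m n : ℕ)
    (h1 : m + 1 ≤ D) (h2 : n + 1 ≤ D) (hgt : D < (m + 1) + (n + 1))
    (g : Matrix (Fin D) (Fin D) ℝ) (hg : IsUnit g.det) (hgsymm : g.IsSymm)
    (α : (Fin (m + 1) → Fin D) → (Fin (n + 1) → Fin D) → ℝ)
    (hA1 : ∀ (x : Fin (m + 1) → Fin D) (y : Fin (n + 1) → Fin D)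
        (i j : Fin (m + 1)), i ≠ j → α (x ∘ Equiv.swap i j) y = - α x y)
    (hA2 : ∀ (x : Fin (m + 1) → Fin D) (y : Fin (n + 1) → Fin D)
        (i j : Fin (n + 1)), i ≠ j → α x (y ∘ Equiv.swap i j) = - α x y)
    (htr : ∀ (x : Fin m → Fin D) (y : Fin n → Fin D),
        ∑ a : Fin D, ∑ b : Fin D, g⁻¹ a b * α (Fin.cons a x) (Fin.cons b y) = 0) :
    ∀ (x : Fin (m + 1) → Fin D) (y : Fin (n + 1) → Fin D), α x y = 0 := by
  open Finset in
  have hB1 := OFB.Ct_antisym1 g⁻¹ α hA1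
  have hB2 := OFB.Ct_antisym2 g⁻¹ α hA2
  have htrB : ∀ (u : Fin m → Fin D) (v : Fin n → Fin D),
      ∑ a : Fin D, OFB.Ct g⁻¹ α (Fin.cons a u) (Fin.cons a v) = 0 := by
    intro u v
    have e : ∀ a : Fin D, OFB.Ct g⁻¹ α (Fin.cons a u) (Fin.cons a v)
        = ∑ c : Fin D, ∑ b : Fin n → Fin D,
            (g⁻¹ a c * ∏ k : Fin n, g⁻¹ (v k) (b k)) * α (Fin.cons a u) (Fin.cons c b) := by
      intro a
      unfold OFB.Ct
      rw [OFB.sum_cons (fun b => (∏ k, g⁻¹ ((Fin.cons a v : Fin (n+1) → Fin D) k) (b k)) *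
          α (Fin.cons a u) b)]
      refine sum_congr rfl fun c _ => sum_congr rfl fun b _ => ?_
      show (∏ k : Fin (n+1), g⁻¹ ((Fin.cons a v : Fin (n+1) → Fin D) k)
          ((Fin.cons c b : Fin (n+1) → Fin D) k)) * α (Fin.cons a u) (Fin.cons c b) = _
      rw [Fin.prod_univ_succ]
      simp [Fin.cons_zero, Fin.cons_succ]
    have e5 : ∀ b : Fin n → Fin D,
        (∑ a : Fin D, ∑ c : Fin D,
          (g⁻¹ a c * ∏ k : Fin n, g⁻¹ (v k) (b k)) * α (Fin.cons a u) (Fin.cons c b))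
        = (∏ k : Fin n, g⁻¹ (v k) (b k)) *
            ∑ a : Fin D, ∑ c : Fin D, g⁻¹ a c * α (Fin.cons a u) (Fin.cons c b) := by
      intro b
      rw [Finset.mul_sum]
      refine sum_congr rfl fun a _ => ?_
      rw [Finset.mul_sum]
      exact sum_congr rfl fun c _ => by ring
    calc (∑ a : Fin D, OFB.Ct g⁻¹ α (Fin.cons a u) (Fin.cons a v))
        = ∑ a : Fin D, ∑ c : Fin D, ∑ b : Fin n → Fin D,
            (g⁻¹ a c * ∏ k : Fin n, g⁻¹ (v k) (b k)) * α (Fin.cons a u) (Fin.cons c b) :=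
          sum_congr rfl fun a _ => e a
      _ = ∑ c : Fin D, ∑ b : Fin n → Fin D, ∑ a : Fin D,
            (g⁻¹ a c * ∏ k : Fin n, g⁻¹ (v k) (b k)) * α (Fin.cons a u) (Fin.cons c b) :=
          OFB.sum_swap3 _
      _ = ∑ b : Fin n → Fin D, ∑ a : Fin D, ∑ c : Fin D,
            (g⁻¹ a c * ∏ k : Fin n, g⁻¹ (v k) (b k)) * α (Fin.cons a u) (Fin.cons c b) :=
          OFB.sum_swap3 _
      _ = 0 := Finset.sum_eq_zero fun b _ => by rw [e5 b, htr u b, mul_zero]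
  have hB0 : ∀ (x : Fin (m+1) → Fin D) (y : Fin (n+1) → Fin D), OFB.Ct g⁻¹ α x y = 0 :=
    OFB.aux hgt (OFB.Ct g⁻¹ α) hB1 hB2 htrB
  intro x y
  have hrec : (∑ b : Fin (n+1) → Fin D, (∏ k, g (y k) (b k)) * OFB.Ct g⁻¹ α x b) = α x y := by
    have e3 : ∀ c : Fin (n+1) → Fin D,
        (∑ b : Fin (n+1) → Fin D, ∏ k, g (y k) (b k) * g⁻¹ (b k) (c k))
          = if y = c then (1:ℝ) else 0 := by
      intro c
      rw [OFB.sum_fun_prod (fun k t => g (y k) t * g⁻¹ t (c k))]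
      have e4 : ∀ k : Fin (n+1), (∑ t : Fin D, g (y k) t * g⁻¹ t (c k))
          = if y k = c k then (1:ℝ) else 0 := by
        intro k
        rw [← Matrix.mul_apply, Matrix.mul_nonsing_inv g hg, Matrix.one_apply]
      rw [Finset.prod_congr rfl fun k _ => e4 k]
      by_cases hyc : y = c
      · subst hyc; simp
      · rw [if_neg hyc]
        obtain ⟨k, hk⟩ := Function.ne_iff.mp hyc
        exact Finset.prod_eq_zero (mem_univ k) (if_neg hk)
    have e2 : ∀ c : Fin (n+1) → Fin D,
        (∑ b : Fin (n+1) → Fin D,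
          (∏ k, g (y k) (b k)) * ((∏ k, g⁻¹ (b k) (c k)) * α x c))
        = (∑ b : Fin (n+1) → Fin D, ∏ k, g (y k) (b k) * g⁻¹ (b k) (c k)) * α x c := by
      intro c
      rw [Finset.sum_mul]
      refine sum_congr rfl fun b _ => ?_
      rw [Finset.prod_mul_distrib]
      ring
    calc (∑ b : Fin (n+1) → Fin D, (∏ k, g (y k) (b k)) * OFB.Ct g⁻¹ α x b)
        = ∑ b : Fin (n+1) → Fin D, ∑ c : Fin (n+1) → Fin D,
            (∏ k, g (y k) (b k)) * ((∏ k, g⁻¹ (b k) (c k)) * α x c) := by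
          refine sum_congr rfl fun b _ => ?_
          unfold OFB.Ct
          rw [Finset.mul_sum]
      _ = ∑ c : Fin (n+1) → Fin D, ∑ b : Fin (n+1) → Fin D,
            (∏ k, g (y k) (b k)) * ((∏ k, g⁻¹ (b k) (c k)) * α x c) := Finset.sum_comm
      _ = ∑ c : Fin (n+1) → Fin D,
            (∑ b : Fin (n+1) → Fin D, ∏ k, g (y k) (b k) * g⁻¹ (b k) (c k)) * α x c :=
          sum_congr rfl fun c _ => e2 c
      _ = ∑ c : Fin (n+1) → Fin D, (if y = c then (1:ℝ) else 0) * α x c :=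
          sum_congr rfl fun c _ => by rw [e3 c]
      _ = α x y := by simp [ite_mul, Finset.sum_ite_eq]
  rw [← hrec]
  simp [hB0]
end
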